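/- arXiv:0804.0775 — 9 statements merged into one kernel-verified Lean document; each statement's English description precedes it below -/
import Mathlib

section
/- For any set of ordinals Y, the order type of the topological closure of Y (in the order topology on the ordinals) is at most otp(Y) + 1. -/
open Cardinal Set

/-- The order type of a set of ordinals. -/
noncomputable def otp (S : Set Ordinal.{0}) : Ordinal.{1} :=
  @Ordinal.type S (Subrel (· < ·) (· ∈ S)) (by infer_instance)

/-!
The map `x ↦ otp (Y ∩ Iic x)` is strictly increasing on `closure Y`: a point `y` of the closure
above `x` is approached from below, so some `z ∈ Y` lies in `(x, y]`, and then `Y ∩ Iic x` sits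
in the proper initial segment of `Y ∩ Iic y` cut off by `z`. All its values are at most `otp Y`,
so it embeds `closure Y` into the ordinals below `otp Y + 1`.
-/

universe u

open Ordinal

theorem Ordinal.type_le_of_strictMono {α β : Type u} [LinearOrder α] [WellFoundedLT α]
    [LinearOrder β] [WellFoundedLT β] {f : α → β} (hf : StrictMono f) :
    typeLT α ≤ typeLT β :=
  (OrderEmbedding.ofStrictMono f hf).ltEmbedding.ordinal_type_le

theorem inter_Ioc_nonempty_of_mem_closure {α : Type*} [LinearOrder α] [TopologicalSpace α]
    [OrderTopology α] [SuccOrder α] {s : Set α} {x y : α} (hy : y ∈ closure s) (hxy : x < y) :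
    (s ∩ Ioc x y).Nonempty := by
  -- in a successor order no point is approached from above
  have hy' : y ∈ closure (s ∩ Iic y) := by
    rwa [mem_closure_iff_nhdsWithin_neBot, inter_comm, nhdsWithin_inter', SuccOrder.nhdsLE_eq_nhds,
      ← nhdsWithin, ← mem_closure_iff_nhdsWithin_neBot]
  obtain ⟨z, hxz, hzs, hzy⟩ := mem_closure_iff.1 hy' (Ioi x) isOpen_Ioi hxy
  exact ⟨z, hzs, hxz, hzy⟩

theorem otp_mono {S T : Set Ordinal.{0}} (h : S ⊆ T) : otp S ≤ otp T :=
  type_le_of_strictMono (f := inclusion h) fun _ _ => id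

theorem otp_lt_of_subset_Iio {S T : Set Ordinal.{0}} {z : Ordinal.{0}} (hz : z ∈ T)
    (hST : S ⊆ T) (hSz : S ⊆ Iio z) : otp S < otp T := by
  have : otp S ≤ typeLT (Iio (⟨z, hz⟩ : T)) :=
    type_le_of_strictMono (f := fun x : S => (⟨⟨x, hST x.2⟩, hSz x.2⟩ : Iio (⟨z, hz⟩ : T)))
      fun _ _ => id
  exact this.trans_lt (typein_lt_type _ _)

theorem strictMonoOn_otp_inter_Iic (Y : Set Ordinal.{0}) :
    StrictMonoOn (fun x => otp (Y ∩ Iic x)) (closure Y) := by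
  intro x _ y hy hxy
  obtain ⟨z, hzY, hxz, hzy⟩ := inter_Ioc_nonempty_of_mem_closure hy hxy
  exact otp_lt_of_subset_Iio ⟨hzY, hzy⟩ (inter_subset_inter_right Y (Iic_subset_Iic.2 hxy.le))
    fun t ht => ht.2.trans_lt hxz

/-- For any set of ordinals `Y`, the order type of the topological closure of `Y`
(in the order topology on the ordinals) is at most `otp Y + 1`. -/
theorem otp_closure_le_otp_add_one (Y : Set Ordinal.{0}) :
    otp (closure Y) ≤ otp Y + 1 := by
  have hlt (x : Ordinal.{0}) : otp (Y ∩ Iic x) < otp Y + 1 :=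
    Order.lt_add_one_iff.2 (otp_mono inter_subset_left)
  calc otp (closure Y) ≤ typeLT (otp Y + 1).ToType :=
        type_le_of_strictMono (f := fun x : closure Y => ToType.mk ⟨otp (Y ∩ Iic x), hlt x⟩)
          fun x y hxy => ToType.mk.strictMono (strictMonoOn_otp_inter_Iic Y x.2 y.2 hxy)
    _ = otp Y + 1 := type_toType _
end

section
/- Assume (κ⁺, κ) ↠ (θ⁺, θ) (Chang conjecture) for a singular cardinal κ and a regular θ. Then θ⁺ ≤ θ^cof(κ). -/
open Cardinal Set

/-- The Chang conjecture `(k2, k1) ↠ (t2, t1)`, in its algebraic form: for every countable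
family of finitary functions on `k2` there is a set `X ⊆ k2` closed under all of them with
`|X| = t2` and `|X ∩ k1| = t1`. -/
def ChangConj (k2 k1 t2 t1 : Cardinal.{0}) : Prop :=
  ∀ F : ℕ → (List Ordinal.{0} → Ordinal.{0}),
    (∀ n l, (∀ x ∈ l, x < k2.ord) → F n l < k2.ord) →
    ∃ X : Set Ordinal.{0}, X ⊆ Set.Iio k2.ord ∧
      (∀ n l, (∀ x ∈ l, x ∈ X) → F n l ∈ X) ∧
      #X = Cardinal.lift.{1} t2 ∧
      #(X ∩ Set.Iio k1.ord : Set Ordinal.{0}) = Cardinal.lift.{1} t1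

/-!
By König's theorem `κ < κ ^ cof κ`, so there are `κ⁺` pairwise distinct functions
`f_β : cof κ → κ`. Let `X` be a Chang substructure closed under evaluation `(β, i) ↦ f_β i` and
under a function picking, for `β ≠ β'`, some `i < cof κ` with `f_β i ≠ f_β' i`. Then
`β ↦ f_β ↾ (X ∩ cof κ)` maps `X` injectively into the functions `X ∩ cof κ → X ∩ κ`, whence
`θ⁺ = |X| ≤ θ ^ |X ∩ cof κ| ≤ θ ^ cof κ`.
-/

universe u

theorem Cardinal.mk_Iio_ord (c : Cardinal.{u}) : #(Iio c.ord) = lift.{u + 1} c := by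
  rw [mk_Iio_ordinal, card_ord]

theorem Cardinal.mk_le_power_of_separating {α β γ : Type u} {X : Set α} {L : Set β}
    {A : Set γ} (f : α → β → γ) (hf : ∀ x ∈ X, ∀ i ∈ L, f x i ∈ A)
    (hsep : ∀ x ∈ X, ∀ y ∈ X, x ≠ y → ∃ i ∈ L, f x i ≠ f y i) :
    #X ≤ #A ^ #L := by
  rw [power_def]
  refine mk_le_of_injective (f := fun x i => ⟨f x i, hf x x.2 i i.2⟩) fun x y hxy => ?_
  by_contra hne
  obtain ⟨i, hi, hfi⟩ := hsep x x.2 y y.2 (Subtype.coe_ne_coe.2 hne)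
  exact hfi (congrArg Subtype.val (congrFun hxy ⟨i, hi⟩))

theorem Cardinal.exists_injective_Iio_succ_ord_to_fun_cof {κ : Cardinal.{u}} (hκ : ℵ₀ ≤ κ) :
    ∃ J : Iio (Order.succ κ).ord → Iio κ.ord.cof.ord → Iio κ.ord, Function.Injective J := by
  suffices #(Iio (Order.succ κ).ord) ≤ #(Iio κ.ord.cof.ord → Iio κ.ord) from
    let ⟨J⟩ := this; ⟨J, J.injective⟩
  rw [← power_def, mk_Iio_ord, mk_Iio_ord, mk_Iio_ord, ← lift_power, lift_le]
  exact Order.succ_le_of_lt (lt_power_cof_ord hκ)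

theorem ChangConj.exists_closed₂ {k2 k1 t2 t1 : Cardinal.{0}} (h : ChangConj k2 k1 t2 t1)
    (f g : Ordinal.{0} → Ordinal.{0} → Ordinal.{0})
    (hf : ∀ x y, f x y < k2.ord) (hg : ∀ x y, g x y < k2.ord) :
    ∃ X : Set Ordinal.{0}, X ⊆ Iio k2.ord ∧
      (∀ x ∈ X, ∀ y ∈ X, f x y ∈ X) ∧ (∀ x ∈ X, ∀ y ∈ X, g x y ∈ X) ∧
      #X = lift.{1} t2 ∧ #(X ∩ Iio k1.ord : Set Ordinal.{0}) = lift.{1} t1 := by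
  let F : ℕ → List Ordinal.{0} → Ordinal.{0} := fun n l =>
    (if n = 0 then f else g) l.headI l.tail.headI
  obtain ⟨X, hXsub, hXcl, hX, hXk1⟩ := h F fun n l _ => by
    by_cases hn : n = 0 <;> simp [F, hn, hf, hg]
  have hcl : ∀ n, ∀ x ∈ X, ∀ y ∈ X, F n [x, y] ∈ X := fun n x hx y hy =>
    hXcl n [x, y] (by simp [hx, hy])
  exact ⟨X, hXsub, fun x hx y hy => by simpa [F] using hcl 0 x hx y hy,
    fun x hx y hy => by simpa [F] using hcl 1 x hx y hy, hX, hXk1⟩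

namespace Ordinal

section Separation

variable {a b c : Ordinal.{u}} (J : Iio a → Iio c → Iio b)

/-- The family `J` read as a total binary function on ordinals, `0` off its domain. -/
noncomputable def evalFamily (β i : Ordinal.{u}) : Ordinal.{u} :=
  if h : β < a ∧ i < c then J ⟨β, h.1⟩ ⟨i, h.2⟩ else 0

open Classical in
noncomputable def separatingIndex (β β' : Ordinal.{u}) : Ordinal.{u} :=
  if h : ∃ i < c, evalFamily J β i ≠ evalFamily J β' i then h.choose else 0

theorem evalFamily_of_lt {β i : Ordinal.{u}} (hβ : β < a) (hi : i < c) :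
    evalFamily J β i = J ⟨β, hβ⟩ ⟨i, hi⟩ :=
  dif_pos ⟨hβ, hi⟩

theorem evalFamily_lt (hb : 0 < b) (β i : Ordinal.{u}) : evalFamily J β i < b := by
  unfold evalFamily
  split
  · exact (J _ _).2
  · exact hb

theorem separatingIndex_lt (hc : 0 < c) (β β' : Ordinal.{u}) : separatingIndex J β β' < c := by
  unfold separatingIndex
  split
  · next h => exact h.choose_spec.1
  · exact hc

theorem evalFamily_separatingIndex_ne (hJ : Function.Injective J) {β β' : Ordinal.{u}}
    (hβ : β < a) (hβ' : β' < a) (hne : β ≠ β') :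
    evalFamily J β (separatingIndex J β β') ≠ evalFamily J β' (separatingIndex J β β') := by
  have hex : ∃ i < c, evalFamily J β i ≠ evalFamily J β' i := by
    by_contra! hall
    refine hne (congrArg Subtype.val (@hJ ⟨β, hβ⟩ ⟨β', hβ'⟩ (funext fun i => Subtype.ext ?_)))
    simpa only [evalFamily_of_lt J hβ i.2, evalFamily_of_lt J hβ' i.2] using hall i i.2
  rw [separatingIndex, dif_pos hex]
  exact hex.choose_spec.2

theorem mk_le_power_of_closed (hJ : Function.Injective J) (hb : 0 < b) (hc : 0 < c)
    {X : Set Ordinal.{u}} (hXa : X ⊆ Iio a)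
    (hXeval : ∀ β ∈ X, ∀ i ∈ X, evalFamily J β i ∈ X)
    (hXsep : ∀ β ∈ X, ∀ β' ∈ X, separatingIndex J β β' ∈ X) :
    #X ≤ #(X ∩ Iio b : Set Ordinal.{u}) ^ #(X ∩ Iio c : Set Ordinal.{u}) :=
  mk_le_power_of_separating (evalFamily J)
    (fun β hβ i hi => ⟨hXeval β hβ i hi.1, evalFamily_lt J hb β i⟩)
    fun β hβ β' hβ' hne => ⟨separatingIndex J β β',
      ⟨hXsep β hβ β' hβ', separatingIndex_lt J hc β β'⟩,
      evalFamily_separatingIndex_ne J hJ (hXa hβ) (hXa hβ') hne⟩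

end Separation

end Ordinal

theorem succ_le_pow_cof_of_changConj_general (κ θ : Cardinal.{0})
    (hκinf : Cardinal.aleph0 ≤ κ) (hθ : θ.IsRegular)
    (hcc : ChangConj (Order.succ κ) κ (Order.succ θ) θ) :
    Order.succ θ ≤ θ ^ (κ.ord.cof) := by
  obtain ⟨J, hJ⟩ := exists_injective_Iio_succ_ord_to_fun_cof hκinf
  have hκ : 0 < κ.ord := ord_pos.2 (aleph0_pos.trans_le hκinf)
  have hcof : 0 < κ.ord.cof.ord := ord_pos.2 (Ordinal.cof_pos.2 hκ)
  have hκlt : κ.ord < (Order.succ κ).ord := ord_lt_ord.2 (Order.lt_succ κ)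
  have hcofle : κ.ord.cof.ord ≤ κ.ord := ord_le_ord.2 (Ordinal.cof_ord_le κ)
  obtain ⟨X, hXsub, hXeval, hXsep, hX, hXκ⟩ := hcc.exists_closed₂
    (Ordinal.evalFamily J) (Ordinal.separatingIndex J)
    (fun β i => (Ordinal.evalFamily_lt J hκ β i).trans hκlt)
    (fun β β' => ((Ordinal.separatingIndex_lt J hcof β β').trans_le hcofle).trans hκlt)
  have hL : #(X ∩ Iio κ.ord.cof.ord : Set Ordinal) ≤ lift.{1} κ.ord.cof :=
    (mk_le_mk_of_subset inter_subset_right).trans_eq (mk_Iio_ord _)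
  have hθ0 : lift.{1} θ ≠ 0 := by simpa using hθ.pos.ne'
  rw [← lift_le.{1}, ← hX, lift_power, ← hXκ]
  calc #X ≤ #(X ∩ Iio κ.ord : Set Ordinal) ^ #(X ∩ Iio κ.ord.cof.ord : Set Ordinal) :=
        Ordinal.mk_le_power_of_closed J hJ hκ hcof hXsub hXeval hXsep
    _ ≤ #(X ∩ Iio κ.ord : Set Ordinal) ^ lift.{1} κ.ord.cof :=
        power_le_power_left (hXκ ▸ hθ0) hL

/-- If the Chang conjecture `(κ⁺, κ) ↠ (θ⁺, θ)` holds for a singular cardinal `κ` and a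
regular cardinal `θ`, then `θ⁺ ≤ θ ^ cof κ`. -/
theorem succ_le_pow_cof_of_changConj (κ θ : Cardinal.{0})
    (hκinf : Cardinal.aleph0 ≤ κ) (hκsing : ¬κ.IsRegular) (hθ : θ.IsRegular)
    (hcc : ChangConj (Order.succ κ) κ (Order.succ θ) θ) :
    Order.succ θ ≤ θ ^ (κ.ord.cof) :=
  succ_le_pow_cof_of_changConj_general κ θ hκinf hθ hcc
end

section
/- Let D be a closed θ-covering matrix on λ. If CP(D) holds (there is an unbounded A ⊆ λ such that every Z ∈ [A]^θ is contained in some D(i,β)), then S(D) holds, witnessed by the set S^λ_θ of ordinals below λ of cofinality θ. -/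
open Cardinal Set

/-- `C` is a club (closed and unbounded) subset of the ordinal `lam`. -/
def IsClubIn (C : Set Ordinal.{0}) (lam : Ordinal.{0}) : Prop :=
  (∀ γ ∈ C, γ < lam) ∧ (∀ α < lam, ∃ β ∈ C, α < β) ∧
    (∀ δ, δ < lam → δ ≠ 0 → (∀ α < δ, ∃ β ∈ C, α < β ∧ β < δ) → δ ∈ C)

/-- `S` is a stationary subset of the ordinal `lam`. -/
def IsStationaryIn (S : Set Ordinal.{0}) (lam : Ordinal.{0}) : Prop :=
  (∀ γ ∈ S, γ < lam) ∧ ∀ C, IsClubIn C lam → (S ∩ C).Nonempty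
/-- `D` is a `θ`-covering matrix on `lam` (`θ`, `lam` ordinals, typically `θ = θc.ord`
for a regular cardinal `θc`): entries `D i β` for `i < θ`, `β < lam` union up to `β`,
are monotone in `i`, and are directed under end-coverage. -/
def IsCovMatrix (θ lam : Ordinal.{0}) (D : Ordinal.{0} → Ordinal.{0} → Set Ordinal.{0}) : Prop :=
  (∀ β < lam, (⋃ i ∈ Set.Iio θ, D i β) = Set.Iio β) ∧
  (∀ i j, i ≤ j → j < θ → ∀ β < lam, D i β ⊆ D j β) ∧
  (∀ β γ, β < γ → γ < lam → ∀ i < θ, ∃ j < θ, D i β ⊆ D j γ)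

/-- `D` is uniform: each `D i β` contains a club in `β` for eventually all `i < θ`. -/
def IsUniformMatrix (θ lam : Ordinal.{0}) (D : Ordinal.{0} → Ordinal.{0} → Set Ordinal.{0}) : Prop :=
  ∀ β < lam, ∃ i₀ < θ, ∀ i, i₀ ≤ i → i < θ → ∃ C, IsClubIn C β ∧ C ⊆ D i β

/-- `D` is transitive: `α ∈ D i β` implies `D i α ⊆ D i β`. -/
def IsTransMatrix (θ lam : Ordinal.{0}) (D : Ordinal.{0} → Ordinal.{0} → Set Ordinal.{0}) : Prop :=
  ∀ i < θ, ∀ β < lam, ∀ α ∈ D i β, D i α ⊆ D i β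

/-- `D` is closed: each entry is closed under suprema of its subsets of size `≤ θ`. -/
def IsClosedMatrix (θ : Cardinal.{0}) (lam : Ordinal.{0})
    (D : Ordinal.{0} → Ordinal.{0} → Set Ordinal.{0}) : Prop :=
  ∀ i < θ.ord, ∀ β < lam, ∀ X ⊆ D i β, X.Nonempty → #X ≤ Cardinal.lift.{1} θ →
    sSup X ∈ D i β

/-- `S(D)`: there is a stationary `S ⊆ lam` such that every `θ`-indexed family of
stationary subsets of `S` meets a single entry of the matrix `D`. -/
def MatrixS (θ : Cardinal.{0}) (lam : Ordinal.{0})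
    (D : Ordinal.{0} → Ordinal.{0} → Set Ordinal.{0}) : Prop :=
  ∃ S, IsStationaryIn S lam ∧ ∀ Ss : Ordinal.{0} → Set Ordinal.{0},
    (∀ i < θ.ord, Ss i ⊆ S ∧ IsStationaryIn (Ss i) lam) →
    ∃ j < θ.ord, ∃ β < lam, ∀ i < θ.ord, (Ss i ∩ D j β).Nonempty

/-- `CP(D)`: there is an unbounded `A ⊆ lam` such that every subset of `A` of size `θ`
is contained in a single entry of `D`. -/
def MatrixCP (θ : Cardinal.{0}) (lam : Ordinal.{0})
    (D : Ordinal.{0} → Ordinal.{0} → Set Ordinal.{0}) : Prop :=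
  ∃ A : Set Ordinal.{0}, A ⊆ Set.Iio lam ∧ (∀ α < lam, ∃ β ∈ A, α < β) ∧
    ∀ Z ⊆ A, #Z = Cardinal.lift.{1} θ → ∃ i < θ.ord, ∃ β < lam, Z ⊆ D i β

/-!
Each stationary `Ss i` meets the club of limit points of the set `A` witnessing `CP(D)`, so it
contains some `dᵢ` of cofinality `θ`, which is the supremum of a set `Xᵢ ⊆ A` of size `θ`. The union
of the `Xᵢ` is again a subset of `A` of size `θ`, so `CP(D)` puts it inside a single entry `D j β`,
and closedness of that entry puts every `dᵢ = sup Xᵢ` into it as well. The points of cofinality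
`θ` form a stationary set because the supremum of an increasing `θ`-sequence through a club lies
in the club.
-/

open Order Ordinal

universe u

def IsCofinalIn (A : Set Ordinal.{u}) (δ : Ordinal.{u}) : Prop :=
  ∀ α < δ, ∃ β ∈ A, α < β ∧ β < δ

theorem isCofinalIn_of_forall_lt {A : Set Ordinal.{u}} {δ : Ordinal.{u}}
    (hA : ∀ β ∈ A, β < δ) (hAδ : ∀ α < δ, ∃ β ∈ A, α < β) : IsCofinalIn A δ := fun α hα =>
  (hAδ α hα).imp fun β ⟨hβA, hαβ⟩ => ⟨hβA, hαβ, hA β hβA⟩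

theorem isRegularCardinalOrder_Iio_ord {c : Cardinal.{u}} (hc : c.IsRegular) :
    IsRegularCardinalOrder (Iio c.ord) where
  type_lt_le_ord_cof := by
    rw [type_lt_Iio, Ordinal.cof_Iio, ← lift_cof, hc.cof_ord, lift_ord]

theorem exists_isCofinalIn_cof_eq {lam : Cardinal.{u}} (hlam : lam.IsRegular)
    {o : Ordinal.{u}} (ho : IsSuccLimit o) (hol : o < lam.ord) {U : Set Ordinal.{u}}
    (hU : IsCofinalIn U lam.ord) {α₀ : Ordinal.{u}} (hα₀ : α₀ < lam.ord) :
    ∃ δ, α₀ < δ ∧ δ < lam.ord ∧ δ.cof = o.cof ∧ IsCofinalIn U δ := by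
  have := isRegularCardinalOrder_Iio_ord hlam
  let V : Set (Iio lam.ord) := {x | x.1 ∈ U ∧ α₀ < x.1}
  have hV : IsCofinal V := by
    rintro ⟨α, hα⟩
    obtain ⟨β, hβU, hαβ, hβ⟩ := hU (max α α₀) (max_lt hα hα₀)
    exact ⟨⟨β, hβ⟩, ⟨hβU, (le_max_right _ _).trans_lt hαβ⟩,
      show α ≤ β from (le_max_left α α₀).trans hαβ.le⟩
  -- `V` is cofinal in the regular `lam.ord`, so it is enumerated increasingly by all of `lam.ord`
  let g : Iio lam.ord → Ordinal := fun x => (enum V hV x).1.1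
  have hg : StrictMono g :=
    (Subtype.strictMono_coe _).comp ((Subtype.strictMono_coe _).comp (enum V hV).strictMono)
  let f : Iio o → Ordinal := fun ξ => g ⟨ξ.1, ξ.2.trans hol⟩
  have hf : StrictMono f := fun _ _ h => hg h
  have : Nonempty (Iio o) := ⟨⟨0, ho.bot_lt⟩⟩
  have hfV : ∀ ξ, f ξ ∈ U ∧ α₀ < f ξ := fun ξ => (enum V hV _).2
  have hbdd : ∀ ξ, f ξ < g ⟨o, hol⟩ := fun ξ => hg ξ.2
  have hfbdd : BddAbove (range f) := ⟨_, forall_mem_range.2 fun ξ => (hbdd ξ).le⟩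
  have hfδ : ∀ ξ, f ξ < ⨆ ξ, f ξ := fun ξ =>
    (hf (show ξ < ⟨succ ξ.1, ho.succ_lt ξ.2⟩ from lt_succ ξ.1)).trans_le (le_ciSup hfbdd _)
  refine ⟨⨆ ξ, f ξ, (hfV ⟨0, ho.bot_lt⟩).2.trans (hfδ _),
    (ciSup_le fun ξ => (hbdd ξ).le).trans_lt (enum V hV ⟨o, hol⟩).1.2,
    cof_iSup_Iio hf ho.isSuccPrelimit, fun α hα => ?_⟩
  obtain ⟨ξ, hξ⟩ := exists_lt_of_lt_ciSup hα
  exact ⟨f ξ, (hfV ξ).1, hξ, hfδ ξ⟩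

theorem IsClubIn.isCofinalIn {C : Set Ordinal.{0}} {lam : Ordinal.{0}} (hC : IsClubIn C lam) :
    IsCofinalIn C lam :=
  isCofinalIn_of_forall_lt hC.1 hC.2.1

theorem isStationaryIn_setOf_cof_eq {θ lam : Cardinal.{0}} (hθ : θ.IsRegular)
    (hlam : lam.IsRegular) (hθlam : θ < lam) :
    IsStationaryIn {δ | δ < lam.ord ∧ δ.cof = θ} lam.ord := by
  refine ⟨fun _ hδ => hδ.1, fun C hC => ?_⟩
  obtain ⟨δ, hδ₀, hδ, hδθ, hCδ⟩ := exists_isCofinalIn_cof_eq hlam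
    (isSuccLimit_ord hθ.aleph0_le) (ord_lt_ord.2 hθlam) hC.isCofinalIn hlam.ord_pos
  exact ⟨δ, ⟨hδ, hδθ.trans hθ.cof_ord⟩, hC.2.2 δ hδ hδ₀.ne_bot hCδ⟩

theorem isClubIn_setOf_isCofinalIn {lam : Cardinal.{0}} (hlam : lam.IsRegular) (hlam₀ : ℵ₀ < lam)
    {A : Set Ordinal.{0}} (hA : IsCofinalIn A lam.ord) :
    IsClubIn {δ | δ < lam.ord ∧ IsCofinalIn A δ} lam.ord := by
  refine ⟨fun _ hδ => hδ.1, fun α hα => ?_, fun δ hδ _ hCδ => ⟨hδ, fun α hα => ?_⟩⟩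
  · obtain ⟨δ, hαδ, hδ, -, hAδ⟩ := exists_isCofinalIn_cof_eq hlam isSuccLimit_omega0
      (by rwa [← ord_aleph0, ord_lt_ord]) hA hα
    exact ⟨δ, ⟨hδ, hAδ⟩, hαδ⟩
  · obtain ⟨β, ⟨-, hAβ⟩, hαβ, hβδ⟩ := hCδ α hα
    obtain ⟨a, ha, hαa, haβ⟩ := hAβ α hαβ
    exact ⟨a, ha, hαa, haβ.trans hβδ⟩

theorem IsCofinalIn.exists_subset_mk_eq_sSup_eq {A : Set Ordinal.{u}} {d : Ordinal.{u}}
    (hA : IsCofinalIn A d) : ∃ X ⊆ A, #X = Cardinal.lift.{u + 1} d.cof ∧ sSup X = d := by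
  obtain ⟨f, hf⟩ := exists_isFundamentalSeq (o := d) rfl
  choose a haA hfa had using fun ξ => hA (f ξ) (f ξ).2
  have hbdd : BddAbove (range a) := ⟨d, forall_mem_range.2 fun ξ => (had ξ).le⟩
  have hsup : sSup (range a) = d := by
    refine (csSup_le' (forall_mem_range.2 fun ξ => (had ξ).le)).antisymm
      (le_of_forall_lt fun α hα => ?_)
    obtain ⟨_, ⟨ξ, rfl⟩, hαξ⟩ := hf.isCofinal_range ⟨α, hα⟩
    exact lt_csSup_of_lt hbdd (mem_range_self ξ) ((show α ≤ f ξ from hαξ).trans_lt (hfa ξ))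
  refine ⟨range a, range_subset_iff.2 haA, le_antisymm ?_ ?_, hsup⟩
  · simpa using mk_range_le (f := a)
  · by_contra! hlt
    rw [lift_cof] at hlt
    exact (sSup_lt_of_lt_cof hlt (forall_mem_range.2 had)).ne hsup

theorem matrixS_of_matrixCP_of_closed_general (θ lam : Cardinal.{0})
    (hθ : θ.IsRegular) (hlam : lam.IsRegular) (hθlam : θ < lam)
    (D : Ordinal.{0} → Ordinal.{0} → Set Ordinal.{0})
    (hclosed : IsClosedMatrix θ lam.ord D)
    (hcp : MatrixCP θ lam.ord D) :
    IsStationaryIn {δ | δ < lam.ord ∧ Ordinal.cof δ = θ} lam.ord ∧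
      ∀ Ss : Ordinal.{0} → Set Ordinal.{0},
        (∀ i < θ.ord, Ss i ⊆ {δ | δ < lam.ord ∧ Ordinal.cof δ = θ} ∧
          IsStationaryIn (Ss i) lam.ord) →
        ∃ j < θ.ord, ∃ β < lam.ord, ∀ i < θ.ord, (Ss i ∩ D j β).Nonempty := by
  refine ⟨isStationaryIn_setOf_cof_eq hθ hlam hθlam, fun Ss hSs => ?_⟩
  obtain ⟨A, hAlam, hAunb, hA⟩ := hcp
  have hlim := isClubIn_setOf_isCofinalIn hlam (hθ.aleph0_le.trans_lt hθlam)
    (isCofinalIn_of_forall_lt hAlam hAunb)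
  have hX : ∀ i, ∃ X ⊆ A, i < θ.ord → #X = Cardinal.lift.{1} θ ∧ sSup X ∈ Ss i := by
    intro i
    by_cases hi : i < θ.ord
    · obtain ⟨d, hdS, -, hAd⟩ := (hSs i hi).2.2 _ hlim
      obtain ⟨X, hXA, hXθ, rfl⟩ := hAd.exists_subset_mk_eq_sSup_eq
      exact ⟨X, hXA, fun _ => ⟨by rw [hXθ, ((hSs i hi).1 hdS).2], hdS⟩⟩
    · exact ⟨∅, empty_subset A, fun h => absurd h hi⟩
  choose X hXA hX using hX
  have hZ : #(⋃ i < θ.ord, X i) = Cardinal.lift.{1} θ :=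
    (mk_biUnion_le_of_le_lift (by simp) (aleph0_le_lift.2 hθ.aleph0_le) X
      fun i hi => (hX i hi).1.le).antisymm
    ((hX 0 hθ.ord_pos).1 ▸ mk_le_mk_of_subset (subset_biUnion_of_mem hθ.ord_pos))
  obtain ⟨j, hj, β, hβ, hZD⟩ := hA _ (iUnion₂_subset fun i _ => hXA i) hZ
  refine ⟨j, hj, β, hβ, fun i hi => ⟨_, (hX i hi).2, ?_⟩⟩
  have hXne : (X i).Nonempty := by
    rw [← nonempty_coe_sort, ← mk_ne_zero_iff, (hX i hi).1]
    exact lift_eq_zero.not.2 hθ.pos.ne'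
  exact hclosed j hj β hβ (X i) ((subset_biUnion_of_mem hi).trans hZD) hXne (hX i hi).1.le

/-- If `D` is a closed `θ`-covering matrix on `lam` and `CP(D)` holds, then `S(D)` holds,
witnessed by the set of points of `lam` of cofinality `θ`. -/
theorem matrixS_of_matrixCP_of_closed (θ lam : Cardinal.{0})
    (hθ : θ.IsRegular) (hlam : lam.IsRegular) (hθlam : θ < lam)
    (D : Ordinal.{0} → Ordinal.{0} → Set Ordinal.{0})
    (hmat : IsCovMatrix θ.ord lam.ord D)
    (hclosed : IsClosedMatrix θ lam.ord D)
    (hcp : MatrixCP θ lam.ord D) :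
    IsStationaryIn {δ | δ < lam.ord ∧ Ordinal.cof δ = θ} lam.ord ∧
      ∀ Ss : Ordinal.{0} → Set Ordinal.{0},
        (∀ i < θ.ord, Ss i ⊆ {δ | δ < lam.ord ∧ Ordinal.cof δ = θ} ∧
          IsStationaryIn (Ss i) lam.ord) →
        ∃ j < θ.ord, ∃ β < lam.ord, ∀ i < θ.ord, (Ss i ∩ D j β).Nonempty :=
  matrixS_of_matrixCP_of_closed_general θ lam hθ hlam hθlam D hclosed hcp
end

section
/- Let D be a transitive θ-covering matrix on λ. If S(D) holds, then CP(D) holds: there is an unbounded (indeed stationary) subset T of λ such that every Z ∈ [T]^θ is contained in some entry D(j,δ) of the matrix. -/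
open Cardinal Set

/-!
Stationarity in `lam` is transferred to Mathlib's `IsStationary` on the well-order `Iio lam`,
where a stationary set covered by fewer than `cof lam` sets has a stationary piece.

For `α ∈ S` the points of `S` above `α` are covered by the `θ` rows `{γ ∈ S | α ∈ D j γ}`, so
some row is stationary; pigeonholing again, one index `j₀` works for a stationary set `T` of `α`.
For `Z ⊆ T` of size `θ`, `S(D)` applied to the stationary rows of the points of `Z` yields one
entry `D j β` containing, for each `α ∈ Z`, some `γ` with `α ∈ D j₀ γ`; transitivity then puts
all of `Z` into `D (max j j₀) β`.
-/

open Order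

section WellOrder

variable {α : Type*} [LinearOrder α]

lemma isClub_Ioi [NoMaxOrder α] (a : α) : IsClub (Ioi a) where
  dirSupClosed := compl_Iic (a := a) ▸ (dirSupInacc_Iic a).compl
  isCofinal b :=
    let ⟨c, hc⟩ := exists_gt (max a b)
    ⟨c, (le_max_left a b).trans_lt hc, (le_max_right a b).trans hc.le⟩

lemma IsStationary.inter_isClub [WellFoundedLT α] {s t : Set α} (hα : Order.cof α ≠ ℵ₀)
    (hs : IsStationary s) (ht : IsClub t) : IsStationary (s ∩ t) := fun u hu => by
  simpa only [inter_assoc] using hs (ht.inter hα hu)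

end WellOrder

section Ordinals

variable {lam : Ordinal.{0}} {S C : Set Ordinal.{0}}

lemma IsClubIn.isClub_preimage (hC : IsClubIn C lam) :
    IsClub (((↑) : Iio lam → Ordinal) ⁻¹' C) where
  dirSupClosed := by
    rw [dirSupClosed_iff_of_linearOrder]
    rintro d hdC ⟨y, hy⟩ a ha
    by_cases had : a ∈ d
    · exact hdC had
    have hlt : ∀ x ∈ d, x < a := fun x hx => (ha.1 hx).lt_of_ne (ne_of_mem_of_not_mem hx had)
    refine hC.2.2 a a.2 (zero_le.trans_lt (show (y : Ordinal) < a from hlt y hy)).ne' fun x hx => ?_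
    obtain ⟨z, hz, hxz⟩ := (lt_isLUB_iff ha (b := ⟨x, hx.trans a.2⟩)).1 hx
    exact ⟨z, hdC hz, hxz, hlt z hz⟩
  isCofinal a := by
    obtain ⟨β, hβ, hlt⟩ := hC.2.1 a a.2
    exact ⟨⟨β, hC.1 β hβ⟩, hβ, hlt.le⟩

lemma IsClub.isClubIn_image (hlam : IsSuccLimit lam) {t : Set (Iio lam)} (ht : IsClub t) :
    IsClubIn (((↑) : Iio lam → Ordinal) '' t) lam := by
  refine ⟨fun _ ⟨x, _, hx⟩ => hx ▸ x.2, fun α hα => ?_, fun δ hδ hδ0 hcl => ?_⟩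
  · obtain ⟨b, hb, hle⟩ := ht.isCofinal ⟨succ α, hlam.succ_lt hα⟩
    exact ⟨b, mem_image_of_mem _ hb, (lt_succ α).trans_le hle⟩
  · have hlub : IsLUB (t ∩ Iio ⟨δ, hδ⟩) ⟨δ, hδ⟩ := by
      refine ⟨fun x hx => hx.2.le, fun u hu => not_lt.1 fun hlt => ?_⟩
      obtain ⟨_, ⟨b, hb, rfl⟩, hub, hbδ⟩ := hcl u hlt
      exact (hu ⟨hb, hbδ⟩).not_gt hub
    obtain ⟨_, ⟨b, hb, rfl⟩, -, hbδ⟩ := hcl 0 (pos_iff_ne_zero.2 hδ0)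
    exact ⟨_, dirSupClosed_iff_of_linearOrder.1 ht.dirSupClosed inter_subset_left
      ⟨b, hb, hbδ⟩ hlub, rfl⟩

lemma isStationaryIn_iff (hlam : IsSuccLimit lam) :
    IsStationaryIn S lam ↔
      S ⊆ Iio lam ∧ IsStationary (((↑) : Iio lam → Ordinal) ⁻¹' S) := by
  refine ⟨fun hS => ⟨hS.1, fun t ht => ?_⟩, fun ⟨hS, hS'⟩ => ⟨hS, fun C hC => ?_⟩⟩
  · obtain ⟨_, hγS, x, hx, rfl⟩ := hS.2 _ (ht.isClubIn_image hlam)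
    exact ⟨x, hγS, hx⟩
  · obtain ⟨x, hxS, hxC⟩ := hS' hC.isClub_preimage
    exact ⟨x, hxS, hxC⟩

lemma cof_Iio_eq_lift_cof (lam : Ordinal.{0}) : Order.cof (Iio lam) = lift.{1} lam.cof := by
  rw [Ordinal.cof_Iio, Ordinal.lift_cof]

lemma cof_Iio_ne_aleph0 (hlam : ℵ₀ < lam.cof) : Order.cof (Iio lam) ≠ ℵ₀ := by
  rw [cof_Iio_eq_lift_cof, Ne, lift_eq_aleph0]
  exact hlam.ne'

lemma isSuccLimit_of_aleph0_lt_cof (hlam : ℵ₀ < lam.cof) : IsSuccLimit lam :=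
  Ordinal.one_lt_cof_iff.1 (one_lt_aleph0.trans hlam)

lemma IsStationaryIn.inter_Ioi (hlam : ℵ₀ < lam.cof) (hS : IsStationaryIn S lam) {α : Ordinal}
    (hα : α < lam) : IsStationaryIn (S ∩ Ioi α) lam := by
  have hlim := isSuccLimit_of_aleph0_lt_cof hlam
  have : NoMaxOrder (Iio lam) :=
    ⟨fun x => ⟨⟨succ x, hlim.succ_lt x.2⟩, lt_succ (x : Ordinal)⟩⟩
  rw [isStationaryIn_iff hlim] at hS ⊢
  refine ⟨inter_subset_left.trans hS.1, ?_⟩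
  exact hS.2.inter_isClub (cof_Iio_ne_aleph0 hlam) (isClub_Ioi (⟨α, hα⟩ : Iio lam))

lemma IsStationaryIn.exists_of_subset_biUnion {θ : Ordinal.{0}} (hlam : ℵ₀ < lam.cof)
    (hθ : θ.card < lam.cof) {W : Set Ordinal} {A : Ordinal → Set Ordinal}
    (hW : IsStationaryIn W lam) (hWA : W ⊆ ⋃ j ∈ Iio θ, A j)
    (hA : ∀ j < θ, A j ⊆ Iio lam) :
    ∃ j < θ, IsStationaryIn (A j) lam := by
  have hlim := isSuccLimit_of_aleph0_lt_cof hlam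
  simp_rw [isStationaryIn_iff hlim] at hW ⊢
  have hcover : ((↑) : Iio lam → Ordinal) ⁻¹' W ⊆ ⋃ j : Iio θ, (↑) ⁻¹' A j := by
    intro x hx
    obtain ⟨j, hj, hxj⟩ := mem_iUnion₂.1 (hWA hx)
    exact mem_iUnion.2 ⟨⟨j, hj⟩, hxj⟩
  obtain ⟨⟨j, hj⟩, hAj⟩ := (isStationary_iUnion_iff (cof_Iio_ne_aleph0 hlam)
    (by rwa [mk_Iio_ordinal, cof_Iio_eq_lift_cof, lift_id, lift_id, lift_lt])).1 (hW.2.mono hcover)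
  exact ⟨j, hj, hA j hj, hAj⟩

section Matrix

variable {θ : Ordinal.{0}} {D : Ordinal.{0} → Ordinal.{0} → Set Ordinal.{0}}

lemma IsCovMatrix.lt_of_mem (hD : IsCovMatrix θ lam D) {i α β : Ordinal} (hi : i < θ)
    (hβ : β < lam) (hα : α ∈ D i β) : α < β :=
  (hD.1 β hβ ▸ mem_biUnion hi hα : α ∈ Iio β)

lemma IsTransMatrix.mem_max (htrans : IsTransMatrix θ lam D) (hD : IsCovMatrix θ lam D)
    {i j α γ β : Ordinal} (hi : i < θ) (hj : j < θ) (hβ : β < lam) (hγ : γ ∈ D i β)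
    (hα : α ∈ D j γ) : α ∈ D (max i j) β := by
  have hij : max i j < θ := max_lt hi hj
  have hγβ : γ < lam := (hD.lt_of_mem hi hβ hγ).trans hβ
  exact htrans _ hij β hβ γ (hD.2.1 i _ (le_max_left i j) hij β hβ hγ)
    (hD.2.1 j _ (le_max_right i j) hij γ hγβ hα)

lemma IsCovMatrix.exists_isStationaryIn_row (hD : IsCovMatrix θ lam D) (hlam : ℵ₀ < lam.cof)
    (hθ : θ.card < lam.cof) (hS : IsStationaryIn S lam) {α : Ordinal} (hα : α < lam) :
    ∃ j < θ, IsStationaryIn {γ ∈ S | α ∈ D j γ} lam := by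
  refine (hS.inter_Ioi hlam hα).exists_of_subset_biUnion hlam hθ (fun γ ⟨hγS, hαγ⟩ => ?_)
    fun j _ γ hγ => hS.1 γ hγ.1
  have : α ∈ ⋃ j ∈ Iio θ, D j γ := hD.1 γ (hS.1 γ hγS) ▸ hαγ
  obtain ⟨j, hj, hαj⟩ := mem_iUnion₂.1 this
  exact mem_biUnion hj ⟨hγS, hαj⟩

lemma IsCovMatrix.exists_isStationaryIn_stationaryRows (hD : IsCovMatrix θ lam D)
    (hlam : ℵ₀ < lam.cof) (hθ : θ.card < lam.cof) (hS : IsStationaryIn S lam) :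
    ∃ j < θ, IsStationaryIn {α ∈ S | IsStationaryIn {γ ∈ S | α ∈ D j γ} lam} lam := by
  refine hS.exists_of_subset_biUnion hlam hθ (fun α hα => ?_) fun j _ α hα => hS.1 α hα.1
  obtain ⟨j, hj, hrow⟩ := hD.exists_isStationaryIn_row hlam hθ hS (hS.1 α hα)
  exact mem_biUnion hj ⟨hα, hrow⟩

end Matrix

lemma exists_entry_meets_of_mk_eq {θ : Cardinal.{0}}
    {D : Ordinal.{0} → Ordinal.{0} → Set Ordinal.{0}}
    (hS : ∀ Ss : Ordinal.{0} → Set Ordinal.{0},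
      (∀ i < θ.ord, Ss i ⊆ S ∧ IsStationaryIn (Ss i) lam) →
        ∃ j < θ.ord, ∃ β < lam, ∀ i < θ.ord, (Ss i ∩ D j β).Nonempty)
    {Z : Set Ordinal.{0}} (hZ : #Z = Cardinal.lift.{1} θ) (F : Ordinal.{0} → Set Ordinal.{0})
    (hF : ∀ α ∈ Z, F α ⊆ S ∧ IsStationaryIn (F α) lam) :
    ∃ j < θ.ord, ∃ β < lam, ∀ α ∈ Z, (F α ∩ D j β).Nonempty := by
  obtain ⟨e⟩ : Nonempty (Iio θ.ord ≃ Z) := by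
    rw [← Cardinal.eq, mk_Iio_ordinal, card_ord, hZ]
  obtain ⟨j, hj, β, hβ, hmeet⟩ :=
    hS (fun i => if hi : i < θ.ord then F (e ⟨i, hi⟩) else ∅) fun i hi => by
      simpa only [dif_pos hi] using hF _ (e ⟨i, hi⟩).2
  refine ⟨j, hj, β, hβ, fun α hα => ?_⟩
  obtain ⟨⟨i, hi⟩, hiα⟩ := e.surjective ⟨α, hα⟩
  have := hmeet i hi
  rwa [dif_pos (mem_Iio.1 hi), hiα] at this

end Ordinals

/-- If `D` is a transitive `θ`-covering matrix on `lam` and `S(D)` holds, then `CP(D)` holds,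
witnessed by a stationary (in particular unbounded) subset `T` of `lam`. -/
theorem matrixCP_of_matrixS_of_transitive (θ lam : Cardinal.{0})
    (hθ : θ.IsRegular) (hlam : lam.IsRegular) (hθlam : θ < lam)
    (D : Ordinal.{0} → Ordinal.{0} → Set Ordinal.{0})
    (hmat : IsCovMatrix θ.ord lam.ord D)
    (htrans : IsTransMatrix θ.ord lam.ord D)
    (hS : MatrixS θ lam.ord D) :
    ∃ T : Set Ordinal.{0}, IsStationaryIn T lam.ord ∧
      ∀ Z ⊆ T, #Z = Cardinal.lift.{1} θ → ∃ j < θ.ord, ∃ δ < lam.ord, Z ⊆ D j δ := by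
  obtain ⟨S, hSstat, hSmeet⟩ := hS
  have hω : ℵ₀ < lam.ord.cof := by rw [hlam.cof_ord]; exact hθ.aleph0_le.trans_lt hθlam
  have hθcof : θ.ord.card < lam.ord.cof := by rwa [card_ord, hlam.cof_ord]
  obtain ⟨j₀, hj₀, hT⟩ := hmat.exists_isStationaryIn_stationaryRows hω hθcof hSstat
  refine ⟨_, hT, fun Z hZT hZ => ?_⟩
  obtain ⟨j, hj, β, hβ, hmeet⟩ := exists_entry_meets_of_mk_eq hSmeet hZ
    (fun α => {γ ∈ S | α ∈ D j₀ γ}) fun α hα => ⟨sep_subset _ _, (hZT hα).2⟩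
  refine ⟨max j j₀, max_lt hj hj₀, β, hβ, fun α hα => ?_⟩
  obtain ⟨γ, ⟨-, hαγ⟩, hγβ⟩ := hmeet α hα
  exact htrans.mem_max hmat hj hj₀ hβ hγβ hαγ
end

section
/- Let θ < λ < ν be regular cardinals with λ^θ < ν, let D be a θ-covering matrix on ν, and assume S(D) holds witnessed by a stationary set S. Then for every family {S_i : i < λ} of stationary subsets of S there are j < θ and β < ν such that S_i ∩ D(j,β) ≠ ∅ for all i < λ. -/
open Cardinal Set

/-!
If no entry `D j β` meets every `Ss i`, choose for each `j < θ`, `β < ν` an index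
`F j β < lam` with `Ss (F j β)` disjoint from `D j β`. There are only `lam ^ θ < ν = cf ν`
functions `θ → lam`, so a single `g` equals `F · β` for cofinally many `β`. Apply `S(D)` to the
`θ`-family `Ss ∘ g`: all of its members meet some `D j₀ β₀`. Choose `β₁ > β₀` with `F · β₁ = g`
and `j₁` with `D j₀ β₀ ⊆ D j₁ β₁`; then `Ss (F j₁ β₁)` meets `D j₁ β₁`, contradicting the choice
of `F`.
-/

universe u v

open Ordinal

theorem Ordinal.exists_cofinal_fiber {o : Ordinal.{u}} (ho : Order.IsSuccLimit o) {T : Type v}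
    (hT : Cardinal.lift.{u} #T < Cardinal.lift.{v} o.cof) (f : Iio o → T) :
    ∃ t, ∀ α < o, ∃ β : Iio o, α < β ∧ f β = t := by
  by_contra! h
  choose b hbo hb using h
  have hbdd : BddAbove (range b) := ⟨o, by rintro _ ⟨t, rfl⟩; exact (hbo t).le⟩
  have hsup : ⨆ t, b t < o := lift_iSup_lt_of_lt_cof (by rwa [← lift_cof]) hbo
  let β : Iio o := ⟨Order.succ (⨆ t, b t), ho.succ_lt hsup⟩
  exact hb (f β) β ((le_ciSup hbdd (f β)).trans_lt (Order.lt_succ _)) rfl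

theorem matrixS_lam_family_general (θ lam ν : Cardinal.{0})
    (hν : ν.IsRegular)
    (hpow : lam ^ θ < ν)
    (D : Ordinal.{0} → Ordinal.{0} → Set Ordinal.{0})
    (hmat : IsCovMatrix θ.ord ν.ord D)
    (S : Set Ordinal.{0})
    (hSD : ∀ Ss : Ordinal.{0} → Set Ordinal.{0},
      (∀ i < θ.ord, Ss i ⊆ S ∧ IsStationaryIn (Ss i) ν.ord) →
      ∃ j < θ.ord, ∃ β < ν.ord, ∀ i < θ.ord, (Ss i ∩ D j β).Nonempty) :
    ∀ Ss : Ordinal.{0} → Set Ordinal.{0},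
      (∀ i < lam.ord, Ss i ⊆ S ∧ IsStationaryIn (Ss i) ν.ord) →
      ∃ j < θ.ord, ∃ β < ν.ord, ∀ i < lam.ord, (Ss i ∩ D j β).Nonempty := by
  intro Ss hSs
  by_contra! hbad
  have hmiss : ∀ (j : Iio θ.ord) (β : Iio ν.ord), ∃ i : Iio lam.ord, Ss i ∩ D j β = ∅ :=
    fun j β ↦ let ⟨i, hi, hmiss⟩ := hbad j j.2 β β.2; ⟨⟨i, hi⟩, hmiss⟩
  choose F hF using hmiss
  have hfew : Cardinal.lift.{0} #(Iio θ.ord → Iio lam.ord) < Cardinal.lift.{1} ν.ord.cof := by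
    simpa [hν.cof_ord] using Cardinal.lift_lt.{0, 1}.2 hpow
  obtain ⟨g, hg⟩ := exists_cofinal_fiber (isSuccLimit_ord hν.aleph0_le) hfew fun β j ↦ F j β
  obtain ⟨j₀, hj₀, β₀, hβ₀, hmeet⟩ :=
    hSD (fun j ↦ if hj : j < θ.ord then Ss (g ⟨j, hj⟩) else ∅) fun j hj ↦ by
      simpa only [dif_pos hj] using hSs _ (g ⟨j, hj⟩).2
  obtain ⟨β₁, hβ₀₁, hgβ₁⟩ := hg β₀ hβ₀
  obtain ⟨j₁, hj₁, hsub⟩ := hmat.2.2 β₀ β₁ hβ₀₁ β₁.2 j₀ hj₀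
  obtain ⟨x, hxSs, hxD⟩ := hmeet j₁ hj₁
  rw [dif_pos hj₁, ← hgβ₁] at hxSs
  exact (hF ⟨j₁, hj₁⟩ β₁).subset ⟨hxSs, hsub hxD⟩

/-- If `θ < lam < ν` are regular, `lam ^ θ < ν`, `D` is a `θ`-covering matrix on `ν` and
`S(D)` holds witnessed by `S`, then every `lam`-indexed family of stationary subsets of `S`
meets a single entry of `D`. -/
theorem matrixS_lam_family (θ lam ν : Cardinal.{0})
    (hθ : θ.IsRegular) (hlam : lam.IsRegular) (hν : ν.IsRegular)
    (hθlam : θ < lam) (hlamν : lam < ν) (hpow : lam ^ θ < ν)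
    (D : Ordinal.{0} → Ordinal.{0} → Set Ordinal.{0})
    (hmat : IsCovMatrix θ.ord ν.ord D)
    (S : Set Ordinal.{0}) (hS : IsStationaryIn S ν.ord)
    (hSD : ∀ Ss : Ordinal.{0} → Set Ordinal.{0},
      (∀ i < θ.ord, Ss i ⊆ S ∧ IsStationaryIn (Ss i) ν.ord) →
      ∃ j < θ.ord, ∃ β < ν.ord, ∀ i < θ.ord, (Ss i ∩ D j β).Nonempty) :
    ∀ Ss : Ordinal.{0} → Set Ordinal.{0},
      (∀ i < lam.ord, Ss i ⊆ S ∧ IsStationaryIn (Ss i) ν.ord) →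
      ∃ j < θ.ord, ∃ β < ν.ord, ∀ i < lam.ord, (Ss i ∩ D j β).Nonempty :=
  matrixS_lam_family_general θ lam ν hν hpow D hmat S hSD
end

section
/- Let θ be regular, λ ∈ (θ, θ^{+ω}) a regular cardinal (i.e., λ = θ^{+n} for some n ≥ 1), and ν > λ regular. Assume S(D) holds for a θ-covering matrix D on ν, witnessed by stationary S. Then for every family {S_i : i < λ} of stationary subsets of S there are j < θ and β < ν such that S_i ∩ D(j,β) ≠ ∅ for all i < λ. -/
/-! Induction on `n`. For a family `(S_i)_{i < μ⁺}`, each initial segment `(S_i)_{i ≤ ξ}`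
has at most `μ` members, so by induction it meets a single entry `D(j_ξ, β_ξ)`. Regularity of
`ν` bounds all `β_ξ` by some `β < ν`, and directedness of `D` moves each `D(j_ξ, β_ξ)` into some
`D(k_ξ, β + 1)`. As `μ⁺` is regular and exceeds `θ`, one value `k` is taken by `k_ξ` for
unboundedly many `ξ`, and then `D(k, β + 1)` meets every `S_i`. -/

open Cardinal Set

lemma exists_ub_lt_ord_of_isRegular {c ν : Cardinal.{0}} (hν : ν.IsRegular) (hc : c < ν)
    (f : Ordinal.{0} → Ordinal.{0}) (hf : ∀ ξ < c.ord, f ξ < ν.ord) :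
    ∃ β < ν.ord, ∀ ξ < c.ord, f ξ ≤ β := by
  have hs : ∀ x ∈ f '' Iio c.ord, x < ν.ord := by
    rintro _ ⟨ξ, hξ, rfl⟩
    exact hf ξ hξ
  refine ⟨sSup (f '' Iio c.ord), Ordinal.sSup_lt_of_lt_cof ?_ hs,
    fun ξ hξ => le_csSup ⟨ν.ord, fun x hx => (hs x hx).le⟩ ⟨ξ, hξ, rfl⟩⟩
  calc #(f '' Iio c.ord) ≤ #(Iio c.ord) := mk_image_le
    _ = lift c := by rw [mk_Iio_ordinal, card_ord]
    _ < lift ν := lift_lt.2 hc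
    _ = (Ordinal.lift ν.ord).cof := by rw [← Ordinal.lift_cof, hν.cof_ord]

lemma exists_unbounded_fiber_of_isRegular {θ lam : Cardinal.{0}} (hlam : lam.IsRegular)
    (hθlam : θ < lam) (k : Ordinal.{0} → Ordinal.{0}) (hk : ∀ ξ < lam.ord, k ξ < θ.ord) :
    ∃ j < θ.ord, ∀ α < lam.ord, ∃ ξ, α < ξ ∧ ξ < lam.ord ∧ k ξ = j := by
  by_contra! hbounded
  choose! α hα hfiber using hbounded
  obtain ⟨b, hb, hαb⟩ := exists_ub_lt_ord_of_isRegular hlam hθlam α hα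
  have hb1 : b + 1 < lam.ord := (isSuccLimit_ord hlam.aleph0_le).add_one_lt hb
  exact hfiber _ (hk _ hb1) (b + 1) ((hαb _ (hk _ hb1)).trans_lt (lt_add_one b)) hb1 rfl

def MeetsCommonEntry (D : Ordinal.{0} → Ordinal.{0} → Set Ordinal.{0}) (θ ν : Ordinal.{0})
    (𝒮 : Set (Set Ordinal.{0})) (κ : Ordinal.{0}) : Prop :=
  ∀ Ss : Ordinal.{0} → Set Ordinal.{0}, (∀ i < κ, Ss i ∈ 𝒮) →
    ∃ j < θ, ∃ β < ν, ∀ i < κ, (Ss i ∩ D j β).Nonempty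

namespace MeetsCommonEntry

variable {D : Ordinal.{0} → Ordinal.{0} → Set Ordinal.{0}} {𝒮 : Set (Set Ordinal.{0})}

lemma of_card_le {θ ν κ o : Ordinal.{0}} (h : MeetsCommonEntry D θ ν 𝒮 κ) (ho : o ≠ 0)
    (hcard : o.card ≤ κ.card) : MeetsCommonEntry D θ ν 𝒮 o := by
  intro Ss hSs
  have : Nonempty (Iio o) := ⟨⟨0, pos_iff_ne_zero.2 ho⟩⟩
  obtain ⟨e⟩ : Nonempty (Iio o ↪ Iio κ) := by
    rwa [← Cardinal.le_def, mk_Iio_ordinal, mk_Iio_ordinal, lift_le]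
  set g := Function.invFun e
  obtain ⟨j, hj, β, hβ, hmeet⟩ :=
    h (fun i => if hi : i < κ then Ss (g ⟨i, hi⟩) else ∅)
      (fun i hi => by simpa only [dif_pos hi] using hSs _ (g ⟨i, hi⟩).2)
  refine ⟨j, hj, β, hβ, fun i hi => ?_⟩
  obtain ⟨⟨a, ha : a < κ⟩, hga : g ⟨a, ha⟩ = ⟨i, hi⟩⟩ :=
    Function.invFun_surjective e.injective ⟨i, hi⟩
  have hmeet_a := hmeet a ha
  rwa [dif_pos ha, hga] at hmeet_a

lemma succ {θ μ ν : Cardinal.{0}} (hμ : ℵ₀ ≤ μ) (hθμ : θ ≤ μ) (hν : ν.IsRegular)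
    (hμν : Order.succ μ < ν) (hD : IsCovMatrix θ.ord ν.ord D)
    (h : MeetsCommonEntry D θ.ord ν.ord 𝒮 μ.ord) :
    MeetsCommonEntry D θ.ord ν.ord 𝒮 (Order.succ μ).ord := by
  intro Ss hSs
  have hreg : (Order.succ μ).IsRegular := isRegular_succ hμ
  have hinit : ∀ ξ < (Order.succ μ).ord,
      ∃ j < θ.ord, ∃ β < ν.ord, ∀ i ≤ ξ, (Ss i ∩ D j β).Nonempty := by
    intro ξ hξ
    have hcard : (ξ + 1).card ≤ μ.ord.card := by
      rw [card_ord, ← Order.lt_succ_iff, ← lt_ord]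
      exact (isSuccLimit_ord hreg.aleph0_le).add_one_lt hξ
    obtain ⟨j, hj, β, hβ, hmeet⟩ := h.of_card_le (by simp) hcard Ss
      fun i hi => hSs i ((Order.lt_add_one_iff.1 hi).trans_lt hξ)
    exact ⟨j, hj, β, hβ, fun i hi => hmeet i (Order.lt_add_one_iff.2 hi)⟩
  choose! jf hjf βf hβf hmeet using hinit
  obtain ⟨βs, hβs, hβle⟩ := exists_ub_lt_ord_of_isRegular hν hμν βf hβf
  have hγ : βs + 1 < ν.ord := (isSuccLimit_ord hν.aleph0_le).add_one_lt hβs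
  have hcover : ∀ ξ < (Order.succ μ).ord, ∃ k < θ.ord, D (jf ξ) (βf ξ) ⊆ D k (βs + 1) :=
    fun ξ hξ => hD.2.2 _ _ ((hβle ξ hξ).trans_lt (lt_add_one βs)) hγ _ (hjf ξ hξ)
  choose! kf hkf hsub using hcover
  obtain ⟨j, hj, hfiber⟩ :=
    exists_unbounded_fiber_of_isRegular hreg (hθμ.trans_lt (Order.lt_succ μ)) kf hkf
  refine ⟨j, hj, βs + 1, hγ, fun i hi => ?_⟩
  obtain ⟨ξ, hiξ, hξ, rfl⟩ := hfiber i hi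
  exact (hmeet ξ hξ i hiξ.le).mono (inter_subset_inter_right _ (hsub ξ hξ))

lemma succ_iterate {θ ν : Cardinal.{0}} (hθ : ℵ₀ ≤ θ) (hν : ν.IsRegular)
    (hD : IsCovMatrix θ.ord ν.ord D) (h : MeetsCommonEntry D θ.ord ν.ord 𝒮 θ.ord) :
    ∀ n : ℕ, Order.succ^[n] θ < ν → MeetsCommonEntry D θ.ord ν.ord 𝒮 (Order.succ^[n] θ).ord
  | 0, _ => h
  | n + 1, hn => by
    rw [Function.iterate_succ_apply'] at hn ⊢
    exact (succ_iterate hθ hν hD h n ((Order.le_succ _).trans_lt hn)).succ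
      (hθ.trans (Order.le_succ_iterate n θ)) (Order.le_succ_iterate n θ) hν hn hD

end MeetsCommonEntry

theorem matrixS_lam_family_of_succ_iterate_general (θ lam ν : Cardinal.{0})
    (hθ : θ.IsRegular)
    (hsucc : ∃ n : ℕ, 1 ≤ n ∧ lam = (Order.succ)^[n] θ)
    (hν : ν.IsRegular) (hlamν : lam < ν)
    (D : Ordinal.{0} → Ordinal.{0} → Set Ordinal.{0})
    (hmat : IsCovMatrix θ.ord ν.ord D)
    (S : Set Ordinal.{0})
    (hSD : ∀ Ss : Ordinal.{0} → Set Ordinal.{0},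
      (∀ i < θ.ord, Ss i ⊆ S ∧ IsStationaryIn (Ss i) ν.ord) →
      ∃ j < θ.ord, ∃ β < ν.ord, ∀ i < θ.ord, (Ss i ∩ D j β).Nonempty) :
    ∀ Ss : Ordinal.{0} → Set Ordinal.{0},
      (∀ i < lam.ord, Ss i ⊆ S ∧ IsStationaryIn (Ss i) ν.ord) →
      ∃ j < θ.ord, ∃ β < ν.ord, ∀ i < lam.ord, (Ss i ∩ D j β).Nonempty := by
  obtain ⟨n, -, rfl⟩ := hsucc
  exact MeetsCommonEntry.succ_iterate (𝒮 := {T | T ⊆ S ∧ IsStationaryIn T ν.ord})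
    hθ.aleph0_le hν hmat hSD n hlamν

/-- If `θ` is regular, `lam = θ⁺ⁿ` for some `n ≥ 1`, `ν > lam` is regular, and `S(D)` holds
for a `θ`-covering matrix `D` on `ν` witnessed by `S`, then every `lam`-indexed family of
stationary subsets of `S` meets a single entry of `D`. -/
theorem matrixS_lam_family_of_succ_iterate (θ lam ν : Cardinal.{0})
    (hθ : θ.IsRegular) (hlam : lam.IsRegular)
    (hsucc : ∃ n : ℕ, 1 ≤ n ∧ lam = (Order.succ)^[n] θ)
    (hν : ν.IsRegular) (hlamν : lam < ν)
    (D : Ordinal.{0} → Ordinal.{0} → Set Ordinal.{0})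
    (hmat : IsCovMatrix θ.ord ν.ord D)
    (S : Set Ordinal.{0}) (hS : IsStationaryIn S ν.ord)
    (hSD : ∀ Ss : Ordinal.{0} → Set Ordinal.{0},
      (∀ i < θ.ord, Ss i ⊆ S ∧ IsStationaryIn (Ss i) ν.ord) →
      ∃ j < θ.ord, ∃ β < ν.ord, ∀ i < θ.ord, (Ss i ∩ D j β).Nonempty) :
    ∀ Ss : Ordinal.{0} → Set Ordinal.{0},
      (∀ i < lam.ord, Ss i ⊆ S ∧ IsStationaryIn (Ss i) ν.ord) →
      ∃ j < θ.ord, ∃ β < ν.ord, ∀ i < lam.ord, (Ss i ∩ D j β).Nonempty :=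
  matrixS_lam_family_of_succ_iterate_general θ lam ν hθ hsucc hν hlamν D hmat S hSD
end

section
/- Assume D is a θ-covering matrix on λ, CP(D) holds witnessed by an unbounded set T ⊆ λ, and λ is θ-inaccessible. Then there are stationarily many δ < λ such that T ∩ δ ⊆ D(i,δ) for some i < θ. -/
/-!
Call `φ` good for `α` if every subset of `T ∩ α` of size `≤ θ` lies in some `D i β` with `β < φ`.
As `|T| = λ > θ`, CP(D) covers such a set after padding it to size `θ`, and since there are at most
`|α|^θ < λ` of them, every `α < λ` has a good `φ < λ`. A continuous chain of length `θ⁺` through a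
club `C`, closed under choosing good bounds, has supremum `δ ∈ C` of cofinality `θ⁺`. If each
`D i δ` missed some `t_i ∈ T ∩ δ`, the `θ` many `t_i` would lie below some `α < δ`, hence in one
`D i β` with `β < δ`; but `D i β ⊆ D j δ` for some `j`, and `D j δ` contains `t_j`.
-/

open Cardinal Set

theorem Ordinal.iSup_Iio_add_one_lt_of_card_lt_cof {a c : Ordinal.{u}}
    {f : Ordinal.{u} → Ordinal.{u}} (ha : a.card < c.cof) (hf : ∀ b < a, f b < c) :
    ⨆ b : Iio a, (f b + 1) < c :=
  Ordinal.lift_iSup_add_one_lt_of_lt_cof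
    (by rwa [Cardinal.mk_Iio_ordinal, ← Ordinal.lift_cof, Cardinal.lift_lift, Cardinal.lift_lt])
    fun b => hf b b.2

theorem Ordinal.iSup_Iio_lt_of_card_lt_cof {a c : Ordinal.{u}} {f : Ordinal.{u} → Ordinal.{u}}
    (ha : a.card < c.cof) (hf : ∀ b < a, f b < c) : ⨆ b : Iio a, f b < c :=
  (Ordinal.iSup_le_iSup_add_one _).trans_lt (Ordinal.iSup_Iio_add_one_lt_of_card_lt_cof ha hf)

theorem Ordinal.le_iSup_Iio {a b : Ordinal.{u}} (f : Ordinal.{u} → Ordinal.{u}) (hb : b < a) :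
    f b ≤ ⨆ b : Iio a, f b :=
  le_ciSup (f := fun b : Iio a => f b) Ordinal.bddAbove_of_small ⟨b, hb⟩

noncomputable def iterSup (G : Ordinal.{u} → Ordinal.{u}) : Ordinal.{u} → Ordinal.{u} :=
  WellFoundedLT.fix fun a e => G (⨆ b : Iio a, e b b.2)

theorem iterSup_eq (G : Ordinal.{u} → Ordinal.{u}) (a : Ordinal.{u}) :
    iterSup G a = G (⨆ b : Iio a, iterSup G b) :=
  WellFoundedLT.fix_eq _ a

section iterSup

variable {lam : Cardinal.{u}} {G : Ordinal.{u} → Ordinal.{u}}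

theorem iSup_iterSup_lt_ord (hlam : lam.IsRegular) (hG : ∀ x < lam.ord, x < G x ∧ G x < lam.ord)
    {a : Ordinal.{u}} (ha : a < lam.ord) : ⨆ b : Iio a, iterSup G b < lam.ord := by
  induction a using WellFoundedLT.induction with
  | ind a ih =>
    refine Ordinal.iSup_Iio_lt_of_card_lt_cof (by rwa [hlam.cof_ord, ← lt_ord]) fun b hb => ?_
    rw [iterSup_eq]
    exact (hG _ (ih b hb (hb.trans ha))).2

theorem iterSup_lt_ord (hlam : lam.IsRegular) (hG : ∀ x < lam.ord, x < G x ∧ G x < lam.ord)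
    {a : Ordinal.{u}} (ha : a < lam.ord) : iterSup G a < lam.ord := by
  rw [iterSup_eq]
  exact (hG _ (iSup_iterSup_lt_ord hlam hG ha)).2

theorem iterSup_lt_iterSup (hlam : lam.IsRegular) (hG : ∀ x < lam.ord, x < G x ∧ G x < lam.ord)
    {a b : Ordinal.{u}} (hba : b < a) (ha : a < lam.ord) : iterSup G b < iterSup G a := by
  conv_rhs => rw [iterSup_eq]
  exact (Ordinal.le_iSup_Iio _ hba).trans_lt (hG _ (iSup_iterSup_lt_ord hlam hG ha)).1

end iterSup

theorem exists_mem_club_cof_eq_closed {lam ν : Cardinal.{0}} {C : Set Ordinal.{0}}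
    (hlam : lam.IsRegular) (hν : ν.IsRegular) (hνlam : ν < lam) (hC : IsClubIn C lam.ord)
    {P : Ordinal.{0} → Ordinal.{0} → Prop} (hP : ∀ α < lam.ord, ∃ φ < lam.ord, P α φ)
    (hP_anti : ∀ α α' φ, α' ≤ α → P α φ → P α' φ) :
    ∃ δ ∈ C, δ.cof = ν ∧ ∀ α < δ, ∃ φ < δ, P α φ := by
  have hstep : ∀ x < lam.ord, ∃ y ∈ C, x < y ∧ ∃ φ < y, P x φ := by
    intro x hx
    obtain ⟨φ, hφ, hPφ⟩ := hP x hx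
    obtain ⟨y, hyC, hy⟩ := hC.2.1 _ (max_lt hx hφ)
    exact ⟨y, hyC, (le_max_left _ _).trans_lt hy, φ, (le_max_right _ _).trans_lt hy, hPφ⟩
  choose! G hGC hGlt hGP using hstep
  have hG : ∀ x < lam.ord, x < G x ∧ G x < lam.ord := fun x hx => ⟨hGlt x hx, hC.1 _ (hGC x hx)⟩
  have hν_lim : Order.IsSuccLimit ν.ord := isSuccLimit_ord hν.aleph0_le
  have hνlam' : ν.ord < lam.ord := ord_lt_ord.2 hνlam
  have : Nonempty (Iio ν.ord) := ⟨⟨0, hν_lim.bot_lt⟩⟩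
  have hmono : StrictMono fun a : Iio ν.ord => iterSup G a := fun b a hba =>
    iterSup_lt_iterSup hlam hG hba (a.2.trans hνlam')
  set δ := ⨆ a : Iio ν.ord, iterSup G a
  have he_lt : ∀ a < ν.ord, iterSup G a < δ := fun a ha =>
    (iterSup_lt_iterSup hlam hG (lt_add_one a) ((hν_lim.add_one_lt ha).trans hνlam')).trans_le
      (Ordinal.le_iSup_Iio _ (hν_lim.add_one_lt ha))
  have hcofinal : ∀ α < δ, ∃ a < ν.ord, α < iterSup G a := fun α hα => by
    obtain ⟨⟨a, ha⟩, h⟩ := (lt_ciSup_iff Ordinal.bddAbove_of_small).1 hα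
    exact ⟨a, ha, h⟩
  have hδ : δ < lam.ord := Ordinal.iSup_Iio_lt_of_card_lt_cof
    (by rwa [card_ord, hlam.cof_ord]) fun a ha => iterSup_lt_ord hlam hG (ha.trans hνlam')
  have heC : ∀ a < ν.ord, iterSup G a ∈ C := fun a ha => by
    rw [iterSup_eq]
    exact hGC _ (iSup_iterSup_lt_ord hlam hG (ha.trans hνlam'))
  have hδC : δ ∈ C := by
    refine hC.2.2 δ hδ (zero_le.trans_lt (he_lt 0 hν_lim.bot_lt)).ne' fun α hα => ?_
    obtain ⟨a, ha, hαa⟩ := hcofinal α hα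
    exact ⟨_, heC a ha, hαa, he_lt a ha⟩
  refine ⟨δ, hδC, ?_, fun α hα => ?_⟩
  · rw [Ordinal.cof_iSup_Iio hmono hν_lim.isSuccPrelimit, hν.cof_ord]
  obtain ⟨a, ha, hαa⟩ := hcofinal α hα
  obtain ⟨φ, hφ, hPφ⟩ := hGP _ (iSup_iterSup_lt_ord hlam hG ((hν_lim.add_one_lt ha).trans hνlam'))
  refine ⟨φ, ?_, hP_anti _ α φ ?_ hPφ⟩
  · calc φ < G (⨆ b : Iio (a + 1), iterSup G b) := hφ
      _ = iterSup G (a + 1) := (iterSup_eq G _).symm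
      _ < δ := he_lt _ (hν_lim.add_one_lt ha)
  · exact hαa.le.trans (Ordinal.le_iSup_Iio _ (lt_add_one a))

theorem Cardinal.exists_superset_subset_mk_eq {α : Type u} {Z T : Set α} {κ : Cardinal.{u}}
    (hκ : ℵ₀ ≤ κ) (hZT : Z ⊆ T) (hZ : #Z ≤ κ) (hT : κ ≤ #T) :
    ∃ Z', Z ⊆ Z' ∧ Z' ⊆ T ∧ #Z' = κ := by
  obtain ⟨W, hWT, hW⟩ := le_mk_iff_exists_subset.1 hT
  refine ⟨Z ∪ W, subset_union_left, union_subset hZT hWT, le_antisymm ?_ ?_⟩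
  · calc #(Z ∪ W : Set α) ≤ #Z + #W := mk_union_le Z W
      _ ≤ κ + κ := add_le_add hZ hW.le
      _ = κ := add_eq_self hκ
  · exact hW ▸ mk_le_mk_of_subset subset_union_right

theorem lift_le_mk_of_unbounded {lam : Cardinal.{0}} {T : Set Ordinal.{0}}
    (hlam : lam.IsRegular) (hTsub : T ⊆ Iio lam.ord) (hTunb : ∀ α < lam.ord, ∃ β ∈ T, α < β) :
    lift.{1} lam ≤ #T := by
  by_contra! hT
  have hsup : sSup T < lam.ord :=
    Ordinal.sSup_lt_of_lt_cof (by rwa [← Ordinal.lift_cof, hlam.cof_ord]) hTsub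
  obtain ⟨β, hβT, hβ⟩ := hTunb _ hsup
  exact hβ.not_ge (le_csSup ⟨lam.ord, fun x hx => (hTsub hx).le⟩ hβT)

def SmallSubsetsCovered (θ : Cardinal.{0}) (D : Ordinal.{0} → Ordinal.{0} → Set Ordinal.{0})
    (T : Set Ordinal.{0}) (α φ : Ordinal.{0}) : Prop :=
  ∀ Z ⊆ T ∩ Iio α, #Z ≤ lift.{1} θ → ∃ i < θ.ord, ∃ β < φ, Z ⊆ D i β

section SmallSubsetsCovered

variable {θ : Cardinal.{0}} {D : Ordinal.{0} → Ordinal.{0} → Set Ordinal.{0}} {T : Set Ordinal.{0}}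

theorem SmallSubsetsCovered.anti {α α' φ : Ordinal.{0}} (h : SmallSubsetsCovered θ D T α φ)
    (hα : α' ≤ α) : SmallSubsetsCovered θ D T α' φ := fun Z hZ =>
  h Z (hZ.trans (inter_subset_inter_right _ (Iio_subset_Iio hα)))

theorem exists_smallSubsetsCovered {lam : Cardinal.{0}} (hlam : lam.IsRegular)
    (hlam_ω : ℵ₀ < lam) (hinacc : ∀ ζ < lam, ζ ^ θ < lam)
    (hcov : ∀ Z ⊆ T, #Z ≤ lift.{1} θ → ∃ i < θ.ord, ∃ β < lam.ord, Z ⊆ D i β)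
    {α : Ordinal.{0}} (hα : α < lam.ord) :
    ∃ φ < lam.ord, SmallSubsetsCovered θ D T α φ := by
  let ι := {Z : Set Ordinal.{0} // Z ⊆ T ∩ Iio α ∧ #Z ≤ lift.{1} θ}
  choose! i hi β hβ hsub using fun Z : ι => hcov Z.1 (Z.2.1.trans inter_subset_left) Z.2.2
  have hι : #ι < lift.{1} lam :=
    calc #ι ≤ max #(T ∩ Iio α : Set Ordinal.{0}) ℵ₀ ^ lift.{1} θ := mk_bounded_subset_le _ _
      _ ≤ max (lift.{1} α.card) ℵ₀ ^ lift.{1} θ := by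
        refine power_le_power_right (max_le_max_right _ ?_)
        exact (mk_le_mk_of_subset inter_subset_right).trans_eq (mk_Iio_ordinal α)
      _ = lift.{1} (max α.card ℵ₀ ^ θ) := by rw [lift_power, lift_max, lift_aleph0]
      _ < lift.{1} lam := lift_lt.2 (hinacc _ (max_lt (lt_ord.1 hα) hlam_ω))
  have hbdd : BddAbove (range fun Z : ι => β Z + 1) :=
    ⟨lam.ord, forall_mem_range.2 fun Z => Order.add_one_le_of_lt (hβ Z)⟩
  refine ⟨⨆ Z : ι, (β Z + 1), Ordinal.lift_iSup_add_one_lt_of_lt_cof ?_ hβ, fun Z hZT hZ => ?_⟩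
  · rwa [lift_uzero, ← Ordinal.lift_cof, hlam.cof_ord]
  · let Z' : ι := ⟨Z, hZT, hZ⟩
    exact ⟨i Z', hi Z', β Z', (lt_add_one _).trans_le (le_ciSup hbdd Z'), hsub Z'⟩

theorem exists_inter_Iio_subset_of_lt_cof {lam : Ordinal.{0}}
    (hdir : ∀ β γ, β < γ → γ < lam → ∀ i < θ.ord, ∃ j < θ.ord, D i β ⊆ D j γ)
    {δ : Ordinal.{0}} (hδ : δ < lam) (hθδ : θ < δ.cof)
    (hclosed : ∀ α < δ, ∃ φ < δ, SmallSubsetsCovered θ D T α φ) :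
    ∃ i < θ.ord, T ∩ Iio δ ⊆ D i δ := by
  by_contra! h
  choose! t htT hti using fun i hi => not_subset.1 (h i hi)
  set α := ⨆ i : Iio θ.ord, (t i + 1)
  have hα : α < δ :=
    Ordinal.iSup_Iio_add_one_lt_of_card_lt_cof (by rwa [card_ord]) fun i hi => (htT i hi).2
  have htα : t '' Iio θ.ord ⊆ T ∩ Iio α := by
    rintro _ ⟨i, hi, rfl⟩
    exact ⟨(htT i hi).1, (lt_add_one _).trans_le (Ordinal.le_iSup_Iio (fun i => t i + 1) hi)⟩
  have hcard : #(t '' Iio θ.ord) ≤ lift.{1} θ := mk_image_le.trans_eq (by simp [mk_Iio_ordinal])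
  obtain ⟨φ, hφ, hcovered⟩ := hclosed α hα
  obtain ⟨i, hi, β, hβ, hsub⟩ := hcovered _ htα hcard
  obtain ⟨j, hj, hij⟩ := hdir β δ (hβ.trans hφ) hδ i hi
  exact hti j hj (hij (hsub ⟨j, hj, rfl⟩))

end SmallSubsetsCovered

theorem stationarily_many_initial_segments_covered_general (θ lam : Cardinal.{0})
    (hθ : θ.IsRegular) (hlam : lam.IsRegular)
    (hinacc : ∀ ζ < lam, ζ ^ θ < lam)
    (D : Ordinal.{0} → Ordinal.{0} → Set Ordinal.{0})
    (hmat : IsCovMatrix θ.ord lam.ord D)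
    (T : Set Ordinal.{0}) (hTsub : T ⊆ Set.Iio lam.ord)
    (hTunb : ∀ α < lam.ord, ∃ β ∈ T, α < β)
    (hTcov : ∀ Z ⊆ T, #Z = Cardinal.lift.{1} θ → ∃ i < θ.ord, ∃ β < lam.ord, Z ⊆ D i β) :
    IsStationaryIn {δ | δ < lam.ord ∧ ∃ i < θ.ord, T ∩ Set.Iio δ ⊆ D i δ} lam.ord := by
  have hθω : ℵ₀ ≤ θ := hθ.aleph0_le
  have hpow : 2 ^ θ < lam := hinacc 2 (natCast_lt_aleph0.trans_le hlam.aleph0_le)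
  have hθlam : θ < lam := (cantor θ).trans hpow
  have hcov : ∀ Z ⊆ T, #Z ≤ lift.{1} θ → ∃ i < θ.ord, ∃ β < lam.ord, Z ⊆ D i β := by
    intro Z hZT hZ
    obtain ⟨Z', hZZ', hZ'T, hZ'⟩ := exists_superset_subset_mk_eq (aleph0_le_lift.2 hθω) hZT hZ
      ((lift_le.2 hθlam.le).trans (lift_le_mk_of_unbounded hlam hTsub hTunb))
    obtain ⟨i, hi, β, hβ, hsub⟩ := hTcov Z' hZ'T hZ'
    exact ⟨i, hi, β, hβ, hZZ'.trans hsub⟩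
  refine ⟨fun γ hγ => hγ.1, fun C hC => ?_⟩
  obtain ⟨δ, hδC, hcof, hclosed⟩ := exists_mem_club_cof_eq_closed hlam
    (isRegular_succ hθω) ((Order.succ_le_of_lt (cantor θ)).trans_lt hpow) hC
    (fun α hα => exists_smallSubsetsCovered hlam (hθω.trans_lt hθlam) hinacc hcov hα)
    fun _ _ _ hα h => h.anti hα
  have hδ : δ < lam.ord := hC.1 δ hδC
  exact ⟨δ, ⟨hδ, exists_inter_Iio_subset_of_lt_cof hmat.2.2 hδ (hcof ▸ Order.lt_succ θ) hclosed⟩,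
    hδC⟩

/-- If `D` is a `θ`-covering matrix on a `θ`-inaccessible `lam` and `CP(D)` holds witnessed
by an unbounded `T ⊆ lam`, then there are stationarily many `δ < lam` with
`T ∩ δ ⊆ D i δ` for some `i < θ`. -/
theorem stationarily_many_initial_segments_covered (θ lam : Cardinal.{0})
    (hθ : θ.IsRegular) (hlam : lam.IsRegular) (hθlam : θ < lam)
    (hinacc : ∀ ζ < lam, ζ ^ θ < lam)
    (D : Ordinal.{0} → Ordinal.{0} → Set Ordinal.{0})
    (hmat : IsCovMatrix θ.ord lam.ord D)
    (T : Set Ordinal.{0}) (hTsub : T ⊆ Set.Iio lam.ord)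
    (hTunb : ∀ α < lam.ord, ∃ β ∈ T, α < β)
    (hTcov : ∀ Z ⊆ T, #Z = Cardinal.lift.{1} θ → ∃ i < θ.ord, ∃ β < lam.ord, Z ⊆ D i β) :
    IsStationaryIn {δ | δ < lam.ord ∧ ∃ i < θ.ord, T ∩ Set.Iio δ ⊆ D i δ} lam.ord :=
  stationarily_many_initial_segments_covered_general θ lam hθ hlam hinacc D hmat T hTsub hTunb hTcov
end

section
/- Let κ be singular of cofinality θ and let d : [κ⁺]² → θ be a coloring such that each set D(i,β) = {α < β : d(α,β) ≤ i} has cardinality less than κ (d is normal). If every δ in a set X ⊆ κ⁺ is d-approachable, then every δ ∈ X is weakly approachable with respect to some fixed sequence E = {e_α : α < κ⁺} of subsets of κ⁺ each of size < κ. -/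
open Cardinal Set

/-- The entry `{α < β | d α β ≤ i}` of the matrix associated to a coloring `d`. -/
def colorEntry (d : Ordinal.{0} → Ordinal.{0} → Ordinal.{0}) (i β : Ordinal.{0}) :
    Set Ordinal.{0} :=
  {α | α < β ∧ d α β ≤ i}

/-- A coloring `d : [κ⁺]² → θ` is normal if each `colorEntry d i β` has size `< κ`. -/
def IsNormalColoring (κ θ ν : Cardinal.{0})
    (d : Ordinal.{0} → Ordinal.{0} → Ordinal.{0}) : Prop :=
  (∀ α β, d α β < θ.ord) ∧
    ∀ i < θ.ord, ∀ β < ν.ord, #(colorEntry d i β) < Cardinal.lift.{1} κ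

/-- `δ` is `d`-approachable: some unbounded `H ⊆ δ` has `d [[H]²]` bounded below `θ`. -/
def DApproachable (θ : Cardinal.{0}) (d : Ordinal.{0} → Ordinal.{0} → Ordinal.{0})
    (δ : Ordinal.{0}) : Prop :=
  ∃ H : Set Ordinal.{0}, H ⊆ Set.Iio δ ∧ (∀ α < δ, ∃ β ∈ H, α < β) ∧
    ∃ i < θ.ord, ∀ α ∈ H, ∀ β ∈ H, α < β → d α β ≤ i

/-- `δ` is weakly approachable with respect to `E`: some `H` unbounded in `δ` of order type
`cof δ` has all its initial segments covered by `{E α : α < δ}`. -/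
def WeaklyApproachable (E : Ordinal.{0} → Set Ordinal.{0}) (δ : Ordinal.{0}) : Prop :=
  ∃ H : Set Ordinal.{0}, H ⊆ Set.Iio δ ∧ (∀ α < δ, ∃ β ∈ H, α < β) ∧
    otp H = Ordinal.lift.{1} (Ordinal.cof δ).ord ∧
    ∀ γ < δ, ∃ α < δ, H ∩ Set.Iio γ ⊆ E α

/-!
Write `α = θ * q + r` with `r < θ` and let `r` code a pair `(i, j)` through a bijection
`θ ≃ θ × θ`; then `e_α` is `D(i, θ * q + j)` together with the interval `[θ * q, α)`, a set of
size `< κ` since `θ < κ`. Let `H` witness that `δ` is `d`-approachable with bound `i`.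
If `θ ∣ δ`, for `γ < δ` pick `β ∈ H` above `γ`: the segment `H ∩ γ` lies in `D(i, β)`, which is
part of `e_α` for some `α` in the same `θ`-block as `β`, hence `α < δ`.
If `θ ∤ δ`, the part of `H` above `θ * (δ / θ) < δ` is still unbounded in `δ`, and its segments
below `γ` lie in the interval part of `e_γ`.
Either way, thinning to a cofinal subset of order type `cf δ` gives weak approachability.
-/

open Ordinal

theorem exists_subset_otp_eq_cof {δ : Ordinal.{0}} {H : Set Ordinal.{0}} (hH : H ⊆ Iio δ)
    (hunb : ∀ α < δ, ∃ β ∈ H, α < β) :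
    ∃ H' ⊆ H, (∀ α < δ, ∃ β ∈ H', α < β) ∧ otp H' = Ordinal.lift.{1} δ.cof.ord := by
  have hcof : IsCofinal {x : Iio δ | x.1 ∈ H} := fun x ↦
    let ⟨β, hβ, hxβ⟩ := hunb x.1 x.2
    ⟨⟨β, hH hβ⟩, hβ, hxβ.le⟩
  obtain ⟨s, hsH, hs, htype⟩ := Ordinal.exists_ord_cof_eq_of_isCofinal hcof
  refine ⟨Subtype.val '' s, image_subset_iff.2 hsH, fun α hα ↦ ?_, ?_⟩
  · obtain ⟨β, hβ, hαβ⟩ := hunb α hα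
    obtain ⟨x, hx, hβx⟩ := hs ⟨β, hH hβ⟩
    exact ⟨x, mem_image_of_mem _ hx, hαβ.trans_le hβx⟩
  · rw [Cardinal.lift_ord, Ordinal.lift_cof, ← Ordinal.cof_Iio, ← htype]
    exact ((Subtype.strictMono_coe _).strictMonoOn s).orderIso.ordinalType_congr.symm

theorem WeaklyApproachable.of_unbounded {E : Ordinal.{0} → Set Ordinal.{0}} {δ : Ordinal.{0}}
    {H : Set Ordinal.{0}} (hH : H ⊆ Iio δ) (hunb : ∀ α < δ, ∃ β ∈ H, α < β)
    (hcover : ∀ γ < δ, ∃ α < δ, H ∩ Iio γ ⊆ E α) : WeaklyApproachable E δ := by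
  obtain ⟨H', hH'H, hunb', hotp⟩ := exists_subset_otp_eq_cof hH hunb
  refine ⟨H', hH'H.trans hH, hunb', hotp, fun γ hγ ↦ ?_⟩
  obtain ⟨α, hα, hcov⟩ := hcover γ hγ
  exact ⟨α, hα, (inter_subset_inter_left _ hH'H).trans hcov⟩

theorem nonempty_equiv_prod_Iio_ord {θ : Cardinal} (hθ : ℵ₀ ≤ θ) :
    Nonempty (Iio θ.ord ≃ Iio θ.ord × Iio θ.ord) := by
  rw [← Cardinal.eq, mk_prod, Cardinal.lift_id, Cardinal.mk_Iio_ordinal, card_ord,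
    ← Cardinal.lift_mul, mul_eq_self hθ]

theorem mul_div_add_lt {o t α j : Ordinal.{0}} (ho : IsPrincipal (· + ·) o) (hα : α < o)
    (hj : j < o) : t * (α / t) + j < o :=
  ho ((mul_div_le α t).trans_lt hα) hj

theorem Ico_mul_div_subset_image_add {t : Ordinal.{0}} (ht : t ≠ 0) (α : Ordinal.{0}) :
    Ico (t * (α / t)) α ⊆ (t * (α / t) + ·) '' Iio t := fun x hx ↦
  ⟨x - t * (α / t), (sub_lt_of_le hx.1).2 (hx.2.trans (lt_mul_div_add α ht)),
    Ordinal.add_sub_cancel_of_le hx.1⟩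

section Coding

variable (d : Ordinal.{0} → Ordinal.{0} → Ordinal.{0}) {t : Ordinal.{0}} (ht : t ≠ 0)
  (φ : Iio t ≃ Iio t × Iio t)

/-- Write `α = t * q + r` with `r < t` and let `φ r = (i, j)`. Then `α` codes the entry
`colorEntry d i (t * q + j)`, together with the interval `[t * q, α)`. -/
def codedEntry (α : Ordinal.{0}) : Set Ordinal.{0} :=
  Ico (t * (α / t)) α ∪
    colorEntry d (φ ⟨α % t, mod_lt α ht⟩).1 (t * (α / t) + (φ ⟨α % t, mod_lt α ht⟩).2)

theorem Ico_subset_codedEntry {α δ : Ordinal.{0}} (hαδ : α ≤ δ) :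
    Ico (t * (δ / t)) α ⊆ codedEntry d ht φ α :=
  fun _ hx ↦ Or.inl ⟨(mul_le_mul_right (div_le_left hαδ t) t).trans hx.1, hx.2⟩

theorem exists_colorEntry_subset_codedEntry (i : Iio t) (β : Ordinal.{0}) :
    ∃ α, α / t = β / t ∧ colorEntry d i β ⊆ codedEntry d ht φ α := by
  set r := φ.symm (i, ⟨β % t, mod_lt β ht⟩)
  have hdiv : (t * (β / t) + r) / t = β / t := by
    rw [mul_add_div _ ht, div_eq_zero_of_lt r.2, add_zero]
  have hcode : φ ⟨(t * (β / t) + r) % t, mod_lt _ ht⟩ = (i, ⟨β % t, mod_lt β ht⟩) := by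
    rw [← Equiv.apply_symm_apply φ (i, _)]
    exact congrArg φ (Subtype.ext ((mul_add_mod_self _ _ _).trans (mod_eq_of_lt r.2)))
  refine ⟨t * (β / t) + r, hdiv, ?_⟩
  rw [codedEntry, hcode, hdiv, div_add_mod]
  exact subset_union_right

theorem codedEntry_subset_Iio {o α : Ordinal.{0}} (ho : IsPrincipal (· + ·) o) (hto : t ≤ o)
    (hα : α < o) : codedEntry d ht φ α ⊆ Iio o := by
  rintro x (hx | hx)
  · exact hx.2.trans hα
  · exact hx.1.trans (mul_div_add_lt ho hα ((φ _).2.2.trans_le hto))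

theorem mk_codedEntry_lt {κ : Cardinal.{0}} {o α : Ordinal.{0}} (hκ : ℵ₀ ≤ κ) (htκ : t.card < κ)
    (ho : IsPrincipal (· + ·) o) (hto : t ≤ o) (hα : α < o)
    (hd : ∀ i < t, ∀ β < o, #(colorEntry d i β) < Cardinal.lift.{1} κ) :
    #(codedEntry d ht φ α) < Cardinal.lift.{1} κ := by
  have hIco : #(Ico (t * (α / t)) α) < Cardinal.lift.{1} κ :=
    calc #(Ico (t * (α / t)) α) ≤ #(Iio t) :=
          (mk_le_mk_of_subset (Ico_mul_div_subset_image_add ht α)).trans mk_image_le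
      _ < Cardinal.lift.{1} κ := by rwa [Cardinal.mk_Iio_ordinal, Cardinal.lift_lt]
  refine (mk_union_le _ _).trans_lt (add_lt_of_lt (by simpa using hκ) hIco ?_)
  exact hd _ (φ _).1.2 _ (mul_div_add_lt ho hα ((φ _).2.2.trans_le hto))

theorem exists_codedEntry_cover_of_dvd {δ : Ordinal.{0}} (htδ : t ∣ δ) {H : Set Ordinal.{0}}
    (hH : H ⊆ Iio δ) (hunb : ∀ α < δ, ∃ β ∈ H, α < β) (i : Iio t)
    (hi : ∀ α ∈ H, ∀ β ∈ H, α < β → d α β ≤ i) {γ : Ordinal.{0}} (hγ : γ < δ) :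
    ∃ α < δ, H ∩ Iio γ ⊆ codedEntry d ht φ α := by
  obtain ⟨β, hβ, hγβ⟩ := hunb γ hγ
  obtain ⟨α, hαβ, hsub⟩ := exists_colorEntry_subset_codedEntry d ht φ i β
  obtain ⟨c, rfl⟩ := htδ
  have hαc : α < t * c := (lt_mul_iff_div_lt ht).2 (hαβ ▸ (lt_mul_iff_div_lt ht).1 (hH hβ))
  exact ⟨α, hαc, fun x hx ↦ hsub ⟨hx.2.trans hγβ, hi x hx.1 β hβ (hx.2.trans hγβ)⟩⟩

end Coding

theorem DApproachable.weaklyApproachable_codedEntry {θ : Cardinal.{0}}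
    {d : Ordinal.{0} → Ordinal.{0} → Ordinal.{0}} (hθ : θ.ord ≠ 0)
    (φ : Iio θ.ord ≃ Iio θ.ord × Iio θ.ord) {δ : Ordinal.{0}} (h : DApproachable θ d δ) :
    WeaklyApproachable (codedEntry d hθ φ) δ := by
  obtain ⟨H, hH, hunb, i, hi, hdi⟩ := h
  by_cases hδ : θ.ord ∣ δ
  · exact .of_unbounded hH hunb fun γ ↦
      exists_codedEntry_cover_of_dvd d hθ φ hδ hH hunb ⟨i, hi⟩ hdi
  set Λ := θ.ord * (δ / θ.ord)
  have hΛ : Λ < δ := (lt_add_of_pos_right Λ (pos_iff_ne_zero.2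
    (mt dvd_iff_mod_eq_zero.2 hδ))).trans_eq (div_add_mod δ _)
  refine .of_unbounded (H := H ∩ Ici Λ) (inter_subset_left.trans hH) (fun α hα ↦ ?_)
    fun γ hγ ↦ ⟨γ, hγ, fun x hx ↦ Ico_subset_codedEntry d hθ φ hγ.le ⟨hx.1.2, hx.2⟩⟩
  obtain ⟨β, hβ, hαβ⟩ := hunb (max α Λ) (max_lt hα hΛ)
  exact ⟨β, ⟨hβ, (le_max_right _ _).trans hαβ.le⟩, (le_max_left _ _).trans_lt hαβ⟩

theorem weaklyApproachable_of_dApproachable_general (κ θ : Cardinal.{0})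
    (hκinf : Cardinal.aleph0 ≤ κ) (hκsing : ¬κ.IsRegular) (hθ : κ.ord.cof = θ)
    (d : Ordinal.{0} → Ordinal.{0} → Ordinal.{0})
    (hd : IsNormalColoring κ θ (Order.succ κ) d)
    (X : Set Ordinal.{0})
    (happr : ∀ δ ∈ X, DApproachable θ d δ) :
    ∃ E : Ordinal.{0} → Set Ordinal.{0},
      (∀ α < (Order.succ κ).ord, E α ⊆ Set.Iio (Order.succ κ).ord ∧
        #(E α) < Cardinal.lift.{1} κ) ∧
      ∀ δ ∈ X, WeaklyApproachable E δ := by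
  have hθinf : ℵ₀ ≤ θ := hθ ▸ aleph0_le_cof_iff.2 (one_lt_cof_iff.2 (isSuccLimit_ord hκinf))
  have hθκ : θ < κ := hθ ▸ (cof_ord_le κ).lt_of_ne fun h ↦ hκsing ⟨hκinf, h.ge⟩
  have hθ0 : θ.ord ≠ 0 := (ord_pos.2 (aleph0_pos.trans_le hθinf)).ne'
  have hκ_le : κ ≤ Order.succ κ := Order.le_succ κ
  have hprincipal : IsPrincipal (· + ·) (Order.succ κ).ord :=
    isPrincipal_add_ord (hκinf.trans hκ_le)
  have hθ_le : θ.ord ≤ (Order.succ κ).ord := ord_le_ord.2 (hθκ.le.trans hκ_le)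
  obtain ⟨φ⟩ := nonempty_equiv_prod_Iio_ord hθinf
  refine ⟨codedEntry d hθ0 φ, fun α hα ↦ ⟨?_, ?_⟩, fun δ hδ ↦ ?_⟩
  · exact codedEntry_subset_Iio d hθ0 φ hprincipal hθ_le hα
  · exact mk_codedEntry_lt d hθ0 φ hκinf (by rwa [card_ord]) hprincipal hθ_le hα hd.2
  · exact (happr δ hδ).weaklyApproachable_codedEntry hθ0 φ

/-- If `κ` is singular of cofinality `θ`, `d` is a normal coloring of pairs from `κ⁺`, and
every `δ ∈ X` is `d`-approachable, then there is a single sequence `E` of subsets of `κ⁺`,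
each of size `< κ`, with respect to which every `δ ∈ X` is weakly approachable. -/
theorem weaklyApproachable_of_dApproachable (κ θ : Cardinal.{0})
    (hκinf : Cardinal.aleph0 ≤ κ) (hκsing : ¬κ.IsRegular) (hθ : κ.ord.cof = θ)
    (d : Ordinal.{0} → Ordinal.{0} → Ordinal.{0})
    (hd : IsNormalColoring κ θ (Order.succ κ) d)
    (X : Set Ordinal.{0}) (hX : X ⊆ Set.Iio (Order.succ κ).ord)
    (happr : ∀ δ ∈ X, DApproachable θ d δ) :
    ∃ E : Ordinal.{0} → Set Ordinal.{0},
      (∀ α < (Order.succ κ).ord, E α ⊆ Set.Iio (Order.succ κ).ord ∧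
        #(E α) < Cardinal.lift.{1} κ) ∧
      ∀ δ ∈ X, WeaklyApproachable E δ :=
  weaklyApproachable_of_dApproachable_general κ θ hκinf hκsing hθ d hd X happr
end

section
/- Suppose M is an elementary substructure of H(μ) (for μ large enough regular) with κ⁺ ∈ M, |M ∩ κ| < ℵ_n and |M ∩ κ⁺| = ℵ_n, where κ is a singular cardinal. Then the order type of M ∩ κ⁺ equals ℵ_n. -/
/-!
Fix `γ ∈ M` with `κ < γ < κ⁺`. In `H(μ)` the least ordinal mapping onto `γ` is `κ = |γ|`, and it
is definable from `γ`; by elementarity `M` contains it together with a surjection `f : κ → γ`,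
and every `α ∈ M ∩ γ` has an `f`-preimage in `M ∩ κ`. Hence `|M ∩ γ| ≤ |M ∩ κ| < ℵ_n` for every
`γ ∈ M ∩ κ⁺`, so `M ∩ κ⁺` is a well-order of size `ℵ_n` all of whose proper initial segments are
smaller: its order type is `ℵ_n`.
-/

open Cardinal Set

/-- The von Neumann ordinal in `ZFSet` corresponding to an ordinal. -/
noncomputable def vN : Ordinal.{0} → ZFSet.{0}
  | o => ZFSet.range fun x : o.ToType =>
      vN (@Ordinal.typein o.ToType (· < ·) isWellOrder_lt x)
  termination_by o => o
  decreasing_by exact Ordinal.typein_lt_self x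

/-- `x` is hereditarily of cardinality `< μ`: the domain of `H(μ)`. -/
inductive HereditarilyLt (μ : Cardinal.{0}) : ZFSet.{0} → Prop
  | intro (x : ZFSet.{0}) (hcard : #x.toSet < Cardinal.lift.{1} μ)
      (hmem : ∀ y, y ∈ x.toSet → HereditarilyLt μ y) : HereditarilyLt μ x

/-- The language of set theory: a single binary (membership) relation. -/
inductive MemRel : ℕ → Type
  | mem : MemRel 2

def Lmem : FirstOrder.Language := ⟨fun _ => Empty, MemRel⟩

/-- `H(μ)` as a structure in the language of set theory. -/
instance (μ : Cardinal.{0}) : Lmem.Structure {x : ZFSet.{0} // HereditarilyLt μ x} :=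
  ⟨fun e _ => e.elim, fun r x => match r with | .mem => (x 0).1 ∈ (x 1).1⟩

abbrev H (μ : Cardinal.{0}) : Type 1 := {x : ZFSet.{0} // HereditarilyLt μ x}

theorem vN_eq_toZFSet : vN = Ordinal.toZFSet := by
  funext o
  induction o using WellFoundedLT.induction with
  | _ o ih =>
    ext x
    rw [vN, ZFSet.mem_range, Ordinal.mem_toZFSet_iff]
    constructor
    · rintro ⟨t, rfl⟩
      exact ⟨_, Ordinal.typein_lt_self t, (ih _ (Ordinal.typein_lt_self t)).symm⟩
    · rintro ⟨a, ha, rfl⟩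
      obtain ⟨t, rfl⟩ := @Ordinal.typein_surj o.ToType (· < ·) isWellOrder_lt a
        (by rwa [Ordinal.type_toType])
      exact ⟨t, ih _ ha⟩

section HereditarilyLt

variable {μ : Cardinal.{0}} {x y a b f : ZFSet.{0}}

theorem hereditarilyLt_iff :
    HereditarilyLt μ x ↔ x.card < μ ∧ ∀ y ∈ x, HereditarilyLt μ y := by
  have hcard : #x.toSet < Cardinal.lift.{1} μ ↔ x.card < μ := by
    rw [show #x.toSet = Cardinal.lift.{1} x.card from ZFSet.cardinalMk_coe_sort, Cardinal.lift_lt]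
  exact ⟨fun ⟨_, hc, hm⟩ => ⟨hcard.1 hc, hm⟩, fun ⟨hc, hm⟩ => ⟨x, hcard.2 hc, hm⟩⟩

theorem HereditarilyLt.of_mem (hx : HereditarilyLt μ x) (hy : y ∈ x) : HereditarilyLt μ y :=
  (hereditarilyLt_iff.1 hx).2 y hy

theorem HereditarilyLt.upair (hμ : ℵ₀ ≤ μ) (ha : HereditarilyLt μ a) (hb : HereditarilyLt μ b) :
    HereditarilyLt μ {a, b} := by
  refine hereditarilyLt_iff.2 ⟨?_, fun y hy => ?_⟩
  · calc ({a, b} : ZFSet).card ≤ ({b} : ZFSet).card + 1 := ZFSet.card_insert_le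
      _ < ℵ₀ := by rw [ZFSet.card_singleton, one_add_one_eq_two]; exact Cardinal.ofNat_lt_aleph0
      _ ≤ μ := hμ
  · rcases ZFSet.mem_pair.1 hy with rfl | rfl
    exacts [ha, hb]

theorem HereditarilyLt.kpair (hμ : ℵ₀ ≤ μ) (ha : HereditarilyLt μ a) (hb : HereditarilyLt μ b) :
    HereditarilyLt μ (ZFSet.pair a b) := by
  rw [ZFSet.pair, ← ZFSet.pair_eq_singleton]
  exact (ha.upair hμ ha).upair hμ (ha.upair hμ hb)

theorem HereditarilyLt.of_kpair_mem (hf : HereditarilyLt μ f) (h : ZFSet.pair a b ∈ f) :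
    HereditarilyLt μ a ∧ HereditarilyLt μ b := by
  have hab : HereditarilyLt μ {a, b} := (hf.of_mem h).of_mem (by simp [ZFSet.pair])
  exact ⟨hab.of_mem (by simp), hab.of_mem (by simp)⟩

theorem hereditarilyLt_toZFSet {o : Ordinal.{0}} (ho : o < μ.ord) :
    HereditarilyLt μ o.toZFSet := by
  induction o using WellFoundedLT.induction with
  | _ o ih =>
    refine hereditarilyLt_iff.2 ⟨?_, fun y hy => ?_⟩
    · rwa [Ordinal.card_toZFSet, ← Cardinal.lt_ord]
    · obtain ⟨a, ha, rfl⟩ := Ordinal.mem_toZFSet_iff.1 hy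
      exact ih a ha (ha.trans ho)

theorem H.forall_mem_iff_eq {z : H μ} {s : ZFSet.{0}}
    (hs : ∀ y ∈ s, HereditarilyLt μ y) :
    (∀ w : H μ, w.1 ∈ z.1 ↔ w.1 ∈ s) ↔ z.1 = s := by
  refine ⟨fun h => ZFSet.ext fun y => ⟨fun hy => ?_, fun hy => ?_⟩, fun h w => by rw [h]⟩
  exacts [(h ⟨y, z.2.of_mem hy⟩).1 hy, (h ⟨y, hs y hy⟩).2 hy]

end HereditarilyLt

def CodesSurj (f d c : ZFSet.{0}) : Prop :=
  (∀ y ∈ c, ∃ x ∈ d, ZFSet.pair x y ∈ f) ∧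
    ∀ x y y', ZFSet.pair x y ∈ f → ZFSet.pair x y' ∈ f → y = y'

theorem CodesSurj.card_le {f d c : ZFSet.{0}} (h : CodesSurj f d c) : c.card ≤ d.card := by
  choose g hgd hgf using h.1
  have hinj : Function.Injective fun y : c => (⟨g y y.2, hgd y y.2⟩ : d) := by
    intro y y' hyy'
    have hg : g y y.2 = g y' y'.2 := congrArg Subtype.val hyy'
    exact Subtype.ext (h.2 _ _ _ (hgf y y.2) (hg ▸ hgf y' y'.2))
  simpa only [ZFSet.cardinalMk_coe_sort, Cardinal.lift_le] using
    Cardinal.mk_le_of_injective hinj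

theorem exists_codesSurj_toZFSet {μ : Cardinal.{0}} (hμ : ℵ₀ ≤ μ) {δ γ : Ordinal.{0}}
    (hδ : δ < μ.ord) (hγ : γ < μ.ord) (hcard : δ.card = γ.card) :
    ∃ f, HereditarilyLt μ f ∧ CodesSurj f δ.toZFSet γ.toZFSet := by
  obtain ⟨e⟩ : Nonempty (Iio δ ≃ Iio γ) := by
    rw [← Cardinal.eq, Cardinal.mk_Iio_ordinal, Cardinal.mk_Iio_ordinal, hcard]
  refine ⟨ZFSet.range fun a : Iio δ => ZFSet.pair a.1.toZFSet (e a).1.toZFSet,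
    hereditarilyLt_iff.2 ⟨?_, ?_⟩, fun y hy => ?_, fun x y y' hy hy' => ?_⟩
  · refine Cardinal.lift_lt.{0, 1}.1 ?_
    calc _ ≤ Cardinal.lift.{0} #(Iio δ) := ZFSet.lift_card_range_le
      _ = Cardinal.lift.{1} δ.card := by rw [Cardinal.lift_uzero, Cardinal.mk_Iio_ordinal]
      _ < Cardinal.lift.{1} μ := Cardinal.lift_lt.2 (Cardinal.lt_ord.1 hδ)
  · simp only [ZFSet.mem_range, forall_exists_index]
    rintro _ a rfl
    exact (hereditarilyLt_toZFSet (a.2.trans hδ)).kpair hμ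
      (hereditarilyLt_toZFSet ((e a).2.trans hγ))
  · obtain ⟨b, hb, rfl⟩ := Ordinal.mem_toZFSet_iff.1 hy
    refine ⟨(e.symm ⟨b, hb⟩).1.toZFSet, Ordinal.toZFSet_mem_toZFSet_iff.2 (e.symm ⟨b, hb⟩).2,
      ZFSet.mem_range.2 ⟨e.symm ⟨b, hb⟩, by simp⟩⟩
  · obtain ⟨a, ha⟩ := ZFSet.mem_range.1 hy
    obtain ⟨a', ha'⟩ := ZFSet.mem_range.1 hy'
    obtain ⟨hxa, rfl⟩ := ZFSet.pair_inj.1 ha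
    obtain ⟨hxa', rfl⟩ := ZFSet.pair_inj.1 ha'
    rw [Subtype.ext (Ordinal.toZFSet_injective (hxa.trans hxa'.symm))]

-- Minimality is relativized to `H(μ)`, the structure in which `Lmem.leastSurjF` is evaluated.
def LeastSurj (μ : Cardinal.{0}) (c d f : ZFSet.{0}) : Prop :=
  d ∈ c ∧ CodesSurj f d c ∧ ∀ x ∈ d, ∀ f', HereditarilyLt μ f' → ¬CodesSurj f' x c

section LeastSurj

variable {μ : Cardinal.{0}}

theorem exists_leastSurj_card_ord (hμ : ℵ₀ ≤ μ) {γ : Ordinal.{0}} (hγμ : γ < μ.ord)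
    (hγ : γ.card.ord < γ) :
    ∃ f, HereditarilyLt μ f ∧ LeastSurj μ γ.toZFSet γ.card.ord.toZFSet f := by
  obtain ⟨f, hf, hsurj⟩ :=
    exists_codesSurj_toZFSet hμ (hγ.trans hγμ) hγμ (Cardinal.card_ord γ.card)
  refine ⟨f, hf, Ordinal.toZFSet_mem_toZFSet_iff.2 hγ, hsurj, fun x hx f' _ hf' => ?_⟩
  obtain ⟨β, hβ, rfl⟩ := Ordinal.mem_toZFSet_iff.1 hx
  have := hf'.card_le
  rw [Ordinal.card_toZFSet, Ordinal.card_toZFSet] at this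
  exact (Cardinal.lt_ord.1 hβ).not_ge this

theorem LeastSurj.unique {γ δ δ' : Ordinal.{0}} {f f' : ZFSet.{0}}
    (h : LeastSurj μ γ.toZFSet δ.toZFSet f) (hf : HereditarilyLt μ f)
    (h' : LeastSurj μ γ.toZFSet δ'.toZFSet f') (hf' : HereditarilyLt μ f') : δ = δ' := by
  rcases lt_trichotomy δ δ' with hlt | heq | hlt
  · exact (h'.2.2 _ (Ordinal.toZFSet_mem_toZFSet_iff.2 hlt) f hf h.2.1).elim
  · exact heq
  · exact (h.2.2 _ (Ordinal.toZFSet_mem_toZFSet_iff.2 hlt) f' hf' h'.2.1).elim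

end LeastSurj

namespace Lmem

open FirstOrder Language BoundedFormula

variable {α : Type} {n : ℕ}

/- Formulas over the variables `α ⊕ Fin n`: under a quantifier the outer variables are read
through `liftVar`, and the newly bound one is `lastVar n`. -/

def liftVar : α ⊕ Fin n → α ⊕ Fin (n + 1) := Sum.map id Fin.castSucc

def lastVar (n : ℕ) : α ⊕ Fin (n + 1) := Sum.inr (Fin.last n)

def memF (x y : α ⊕ Fin n) : Lmem.BoundedFormula α n :=
  Relations.boundedFormula₂ (L := Lmem) MemRel.mem (Term.var x) (Term.var y)

def eqF (x y : α ⊕ Fin n) : Lmem.BoundedFormula α n :=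
  Term.var x =' Term.var y

def upairF (z a b : α ⊕ Fin n) : Lmem.BoundedFormula α n :=
  ∀' (memF (lastVar n) (liftVar z) ⇔
    eqF (lastVar n) (liftVar a) ⊔ eqF (lastVar n) (liftVar b))

def kpairF (p a b : α ⊕ Fin n) : Lmem.BoundedFormula α n :=
  ∀' (memF (lastVar n) (liftVar p) ⇔
    upairF (lastVar n) (liftVar a) (liftVar a) ⊔ upairF (lastVar n) (liftVar a) (liftVar b))

def kpairMemF (f a b : α ⊕ Fin n) : Lmem.BoundedFormula α n :=
  ∃' (memF (lastVar n) (liftVar f) ⊓ kpairF (lastVar n) (liftVar a) (liftVar b))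

def codesSurjF (f d c : α ⊕ Fin n) : Lmem.BoundedFormula α n :=
  ∀' (memF (lastVar n) (liftVar c) ⟹
      ∃' (memF (lastVar (n + 1)) (liftVar (liftVar d)) ⊓
        kpairMemF (liftVar (liftVar f)) (lastVar (n + 1)) (liftVar (lastVar n)))) ⊓
    ∀' ∀' ∀' (kpairMemF (liftVar (liftVar (liftVar f))) (liftVar (liftVar (lastVar n)))
        (liftVar (lastVar (n + 1))) ⟹
      kpairMemF (liftVar (liftVar (liftVar f))) (liftVar (liftVar (lastVar n))) (lastVar (n + 2)) ⟹
        eqF (liftVar (lastVar (n + 1))) (lastVar (n + 2)))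

def leastSurjF (c d f : α ⊕ Fin n) : Lmem.BoundedFormula α n :=
  memF d c ⊓ codesSurjF f d c ⊓
    ∀' (memF (lastVar n) (liftVar d) ⟹
      ∀' ∼(codesSurjF (lastVar (n + 1)) (liftVar (lastVar n)) (liftVar (liftVar c))))

variable {μ : Cardinal.{0}} {v : α → H μ} {xs : Fin n → H μ}

@[simp]
theorem elim_snoc_liftVar (w : H μ) (z : α ⊕ Fin n) :
    Sum.elim v (Fin.snoc xs w) (liftVar z) = Sum.elim v xs z := by
  cases z <;> simp [liftVar]

@[simp]
theorem elim_snoc_lastVar (w : H μ) :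
    Sum.elim v (Fin.snoc xs w) (lastVar n) = w := by
  simp [lastVar]

@[simp]
theorem realize_memF (x y : α ⊕ Fin n) :
    (memF x y).Realize v xs ↔ (Sum.elim v xs x).1 ∈ (Sum.elim v xs y).1 :=
  Iff.rfl

@[simp]
theorem realize_eqF (x y : α ⊕ Fin n) :
    (eqF x y).Realize v xs ↔ (Sum.elim v xs x).1 = (Sum.elim v xs y).1 := by
  simp [eqF, Subtype.ext_iff]

theorem realize_upairF (hμ : ℵ₀ ≤ μ) (z a b : α ⊕ Fin n) :
    (upairF z a b).Realize v xs ↔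
      (Sum.elim v xs z).1 = {(Sum.elim v xs a).1, (Sum.elim v xs b).1} := by
  simp only [upairF, realize_all, realize_iff, realize_sup, realize_memF, realize_eqF,
    elim_snoc_liftVar, elim_snoc_lastVar, ← ZFSet.mem_pair]
  exact H.forall_mem_iff_eq fun _ => ((Sum.elim v xs a).2.upair hμ (Sum.elim v xs b).2).of_mem

theorem realize_kpairF (hμ : ℵ₀ ≤ μ) (p a b : α ⊕ Fin n) :
    (kpairF p a b).Realize v xs ↔
      (Sum.elim v xs p).1 = ZFSet.pair (Sum.elim v xs a).1 (Sum.elim v xs b).1 := by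
  simp only [kpairF, realize_all, realize_iff, realize_sup, realize_memF, realize_upairF hμ,
    elim_snoc_liftVar, elim_snoc_lastVar, ZFSet.pair_eq_singleton, ← ZFSet.mem_pair]
  exact H.forall_mem_iff_eq fun _ => ((Sum.elim v xs a).2.kpair hμ (Sum.elim v xs b).2).of_mem

theorem realize_kpairMemF (hμ : ℵ₀ ≤ μ) (f a b : α ⊕ Fin n) :
    (kpairMemF f a b).Realize v xs ↔
      ZFSet.pair (Sum.elim v xs a).1 (Sum.elim v xs b).1 ∈ (Sum.elim v xs f).1 := by
  simp only [kpairMemF, realize_ex, realize_inf, realize_memF, realize_kpairF hμ,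
    elim_snoc_liftVar, elim_snoc_lastVar]
  exact ⟨fun ⟨p, hp, hpab⟩ => hpab ▸ hp, fun h => ⟨⟨_, (Sum.elim v xs f).2.of_mem h⟩, h, rfl⟩⟩

theorem realize_codesSurjF (hμ : ℵ₀ ≤ μ) (f d c : α ⊕ Fin n) :
    (codesSurjF f d c).Realize v xs ↔
      CodesSurj (Sum.elim v xs f).1 (Sum.elim v xs d).1 (Sum.elim v xs c).1 := by
  simp only [codesSurjF, realize_all, realize_ex, realize_inf, realize_imp, realize_memF,
    realize_eqF, realize_kpairMemF hμ, elim_snoc_liftVar, elim_snoc_lastVar]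
  have hf := (Sum.elim v xs f).2
  refine and_congr ⟨fun h y hy => ?_, fun h y hy => ?_⟩ ⟨fun h x y y' hy hy' => ?_, ?_⟩
  · obtain ⟨x, hx, hxy⟩ := h ⟨y, (Sum.elim v xs c).2.of_mem hy⟩ hy
    exact ⟨x.1, hx, hxy⟩
  · obtain ⟨x, hx, hxy⟩ := h y.1 hy
    exact ⟨⟨x, (Sum.elim v xs d).2.of_mem hx⟩, hx, hxy⟩
  · exact h ⟨x, (hf.of_kpair_mem hy).1⟩ ⟨y, (hf.of_kpair_mem hy).2⟩
      ⟨y', (hf.of_kpair_mem hy').2⟩ hy hy'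
  · exact fun h x y y' => h x.1 y.1 y'.1

theorem realize_leastSurjF (hμ : ℵ₀ ≤ μ) (c d f : α ⊕ Fin n) :
    (leastSurjF c d f).Realize v xs ↔
      LeastSurj μ (Sum.elim v xs c).1 (Sum.elim v xs d).1 (Sum.elim v xs f).1 := by
  simp only [leastSurjF, realize_all, realize_inf, realize_imp, realize_not, realize_memF,
    realize_codesSurjF hμ, elim_snoc_liftVar, elim_snoc_lastVar, LeastSurj, and_assoc]
  refine and_congr_right' (and_congr_right' ⟨fun h x hx f' hf' => ?_, fun h x hx f' => ?_⟩)
  exacts [h ⟨x, (Sum.elim v xs d).2.of_mem hx⟩ hx ⟨f', hf'⟩, h x.1 hx f'.1 f'.2]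

end Lmem

theorem FirstOrder.Language.ElementarySubstructure.exists_realize_of_exists
    {L : Language} {N : Type*} [L.Structure N] (S : L.ElementarySubstructure N)
    {α : Type*} {k : ℕ} (φ : L.BoundedFormula α k) (v : α → S)
    (h : ∃ xs : Fin k → N, φ.Realize (((↑) : S → N) ∘ v) xs) :
    ∃ xs : Fin k → S, φ.Realize (((↑) : S → N) ∘ v) (((↑) : S → N) ∘ xs) := by
  obtain ⟨xs, hxs⟩ := BoundedFormula.realize_exs.1
    ((S.subtype.map_formula φ.exs v).1 (BoundedFormula.realize_exs.2 h))
  exact ⟨xs, (S.subtype.map_boundedFormula φ v xs).2 hxs⟩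

section OrdinalsOf

open FirstOrder Language

variable {μ : Cardinal.{0}} (M : Lmem.ElementarySubstructure (H μ))

def ordinalsOf : Set Ordinal.{0} := {α | ∃ x ∈ M, x.1 = α.toZFSet}

theorem setOf_lt_vN_mem_eq (δ : Ordinal.{0}) :
    {α : Ordinal.{0} | α < δ ∧ ∃ h : HereditarilyLt μ (vN α), (⟨vN α, h⟩ : H μ) ∈ M} =
      Iio δ ∩ ordinalsOf M := by
  ext α
  simp only [vN_eq_toZFSet, ordinalsOf, Set.mem_ofPred_eq, Set.mem_inter_iff, Set.mem_Iio,
    Subtype.exists]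
  refine and_congr_right' ⟨fun ⟨h, hM⟩ => ⟨_, h, hM, rfl⟩, ?_⟩
  rintro ⟨x, h, hM, rfl⟩
  exact ⟨h, hM⟩

variable {M}

theorem mk_Iio_inter_ordinalsOf_le_of_codesSurj (hμ : ℵ₀ ≤ μ) {δ γ : Ordinal.{0}} (d f : M)
    (hd : d.1.1 = δ.toZFSet) (hf : CodesSurj f.1.1 δ.toZFSet γ.toZFSet) :
    #↥(Iio γ ∩ ordinalsOf M) ≤ #↥(Iio δ ∩ ordinalsOf M) := by
  have preimage : ∀ α : ↥(Iio γ ∩ ordinalsOf M), ∃ β : ↥(Iio δ ∩ ordinalsOf M),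
      ZFSet.pair β.1.toZFSet α.1.toZFSet ∈ f.1.1 := by
    rintro ⟨α, hαγ, a, haM, ha⟩
    obtain ⟨x, hx, hxα⟩ := hf.1 _ (Ordinal.toZFSet_mem_toZFSet_iff.2 hαγ)
    have hxμ : HereditarilyLt μ x := (f.1.2.of_kpair_mem hxα).1
    obtain ⟨xs, hxs⟩ := M.exists_realize_of_exists
      (Lmem.memF (Sum.inr 0) (Sum.inl 0) ⊓ Lmem.kpairMemF (Sum.inl 1) (Sum.inr 0) (Sum.inl 2))
      ![d, f, ⟨a, haM⟩] ⟨![⟨x, hxμ⟩], by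
        simp only [BoundedFormula.realize_inf, Lmem.realize_memF, Lmem.realize_kpairMemF hμ]
        exact ⟨hd ▸ hx, ha ▸ hxα⟩⟩
    replace hxs : (xs 0).1.1 ∈ d.1.1 ∧ ZFSet.pair (xs 0).1.1 a ∈ f.1.1 := by
      rw [BoundedFormula.realize_inf, Lmem.realize_memF, Lmem.realize_kpairMemF hμ] at hxs
      exact hxs
    obtain ⟨β, hβ, hβx⟩ := Ordinal.mem_toZFSet_iff.1 (hd ▸ hxs.1)
    refine ⟨⟨β, hβ, (xs 0).1, (xs 0).2, hβx.symm⟩, ?_⟩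
    show ZFSet.pair β.toZFSet α.toZFSet ∈ f.1.1
    rw [hβx, ← ha]
    exact hxs.2
  choose g hg using preimage
  refine Cardinal.mk_le_of_injective (f := g) fun α α' hαα' => Subtype.ext ?_
  exact Ordinal.toZFSet_injective (hf.2 _ _ _ (hg α) (hαα' ▸ hg α'))

theorem mk_Iio_inter_ordinalsOf_le_card_ord (hμ : ℵ₀ ≤ μ) {γ : Ordinal.{0}}
    (hγM : γ ∈ ordinalsOf M) (hγμ : γ < μ.ord) :
    #↥(Iio γ ∩ ordinalsOf M) ≤ #↥(Iio γ.card.ord ∩ ordinalsOf M) := by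
  rcases (Cardinal.ord_card_le γ).eq_or_lt with heq | hlt
  · rw [heq]
  obtain ⟨f₀, hf₀, h₀⟩ := exists_leastSurj_card_ord hμ hγμ hlt
  obtain ⟨c, hcM, hc⟩ := hγM
  obtain ⟨xs, hxs⟩ := M.exists_realize_of_exists
    (Lmem.leastSurjF (Sum.inl 0) (Sum.inr 0) (Sum.inr 1)) ![⟨c, hcM⟩]
    ⟨![⟨_, hereditarilyLt_toZFSet (hlt.trans hγμ)⟩, ⟨f₀, hf₀⟩],
      (Lmem.realize_leastSurjF hμ _ _ _).2 (hc ▸ h₀)⟩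
  rw [Lmem.realize_leastSurjF hμ] at hxs
  replace hxs : LeastSurj μ γ.toZFSet (xs 0).1.1 (xs 1).1.1 := hc ▸ hxs
  obtain ⟨δ, -, hδ⟩ := Ordinal.mem_toZFSet_iff.1 hxs.1
  rw [← hδ] at hxs
  obtain rfl : δ = γ.card.ord := hxs.unique (xs 1).1.2 h₀ hf₀
  exact mk_Iio_inter_ordinalsOf_le_of_codesSurj hμ (xs 0) (xs 1) hδ.symm hxs.2.1

end OrdinalsOf

theorem otp_eq_ord {S : Set Ordinal.{0}} {c : Cardinal.{1}} (hS : #S = c)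
    (hseg : ∀ γ ∈ S, #↥(S ∩ Iio γ) < c) : otp S = c.ord := by
  refine le_antisymm (le_of_forall_lt fun o ho => ?_) (hS ▸ Cardinal.ord_le_type _)
  obtain ⟨γ, rfl⟩ := Ordinal.typein_surj _ ho
  rw [Cardinal.lt_ord, Ordinal.card_typein]
  refine lt_of_le_of_lt ?_ (hseg γ.1 γ.2)
  exact Cardinal.mk_le_of_injective (f := fun b => ⟨b.1.1, b.1.2, b.2⟩)
    fun b b' h => Subtype.ext (Subtype.ext (Subtype.mk.inj h))

theorem otp_inter_eq_aleph_general (μ κ : Cardinal.{0}) (n : ℕ)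
    (hμreg : μ.IsRegular) (hμbig : Order.succ κ < μ)
    (M : Lmem.ElementarySubstructure {x : ZFSet.{0} // HereditarilyLt μ x})
    (hsmall : #{α : Ordinal.{0} | α < κ.ord ∧
        ∃ h : HereditarilyLt μ (vN α), (⟨vN α, h⟩ : {x // HereditarilyLt μ x}) ∈ M} <
      Cardinal.lift.{1,0} (Cardinal.aleph n))
    (hsize : #{α : Ordinal.{0} | α < (Order.succ κ).ord ∧
        ∃ h : HereditarilyLt μ (vN α), (⟨vN α, h⟩ : {x // HereditarilyLt μ x}) ∈ M} =
      Cardinal.lift.{1,0} (Cardinal.aleph n)) :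
    otp {α : Ordinal.{0} | α < (Order.succ κ).ord ∧
        ∃ h : HereditarilyLt μ (vN α), (⟨vN α, h⟩ : {x // HereditarilyLt μ x}) ∈ M} =
      Ordinal.lift.{1,0} (Cardinal.aleph n).ord := by
  rw [setOf_lt_vN_mem_eq] at hsmall hsize ⊢
  rw [Cardinal.lift_ord]
  refine otp_eq_ord hsize fun γ ⟨hγκ, hγM⟩ => ?_
  have hγcard : γ.card.ord ≤ κ.ord :=
    Cardinal.ord_le_ord.2 (Order.lt_succ_iff.1 (Cardinal.lt_ord.1 hγκ))
  calc #↥((Iio (Order.succ κ).ord ∩ ordinalsOf M) ∩ Iio γ)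
      _ ≤ #↥(Iio γ ∩ ordinalsOf M) := Cardinal.mk_le_mk_of_subset fun α hα => ⟨hα.2, hα.1.2⟩
      _ ≤ #↥(Iio γ.card.ord ∩ ordinalsOf M) :=
        mk_Iio_inter_ordinalsOf_le_card_ord hμreg.aleph0_le hγM
          (hγκ.trans (Cardinal.ord_lt_ord.2 hμbig))
      _ ≤ #↥(Iio κ.ord ∩ ordinalsOf M) :=
        Cardinal.mk_le_mk_of_subset (Set.inter_subset_inter_left _ (Set.Iio_subset_Iio hγcard))
      _ < _ := hsmall

/-- If `M ≺ H(μ)` (for `μ` regular, large enough) with `κ⁺ ∈ M`, `|M ∩ κ| < ℵ_n` and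
`|M ∩ κ⁺| = ℵ_n`, where `κ` is singular, then `otp (M ∩ κ⁺) = ℵ_n`. -/
theorem otp_inter_eq_aleph (μ κ : Cardinal.{0}) (n : ℕ) (hn : 0 < n)
    (hκinf : Cardinal.aleph0 ≤ κ) (hκsing : ¬κ.IsRegular)
    (hμreg : μ.IsRegular) (hμbig : Order.succ κ < μ)
    (M : Lmem.ElementarySubstructure {x : ZFSet.{0} // HereditarilyLt μ x})
    (hsucc : ∃ h : HereditarilyLt μ (vN (Order.succ κ).ord),
      (⟨vN (Order.succ κ).ord, h⟩ : {x // HereditarilyLt μ x}) ∈ M)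
    (hsmall : #{α : Ordinal.{0} | α < κ.ord ∧
        ∃ h : HereditarilyLt μ (vN α), (⟨vN α, h⟩ : {x // HereditarilyLt μ x}) ∈ M} <
      Cardinal.lift.{1,0} (Cardinal.aleph n))
    (hsize : #{α : Ordinal.{0} | α < (Order.succ κ).ord ∧
        ∃ h : HereditarilyLt μ (vN α), (⟨vN α, h⟩ : {x // HereditarilyLt μ x}) ∈ M} =
      Cardinal.lift.{1,0} (Cardinal.aleph n)) :
    otp {α : Ordinal.{0} | α < (Order.succ κ).ord ∧
        ∃ h : HereditarilyLt μ (vN α), (⟨vN α, h⟩ : {x // HereditarilyLt μ x}) ∈ M} =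
      Ordinal.lift.{1,0} (Cardinal.aleph n).ord :=
  otp_inter_eq_aleph_general μ κ n hμreg hμbig M hsmall hsize
end
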